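/- arXiv:2403.16484 — 4 statements merged into one kernel-verified Lean document; each statement's English description precedes it below -/
import Mathlib

section
/- For every even integer n ≥ 2, the local antimagic chromatic number of the peanut graph Pt(n) equals 3, i.e., χ_la(Pt(n)) = 3. -/
namespace LocalAntimagic

variable {V W : Type*}

/-- Induced vertex label: sum of edge labels over edges incident to `v`. -/
noncomputable def fplus (G : SimpleGraph V) (f : Sym2 V → ℕ) (v : V) : ℕ :=
  ∑ᶠ e ∈ G.incidenceSet v, f e

/-- `f` is a local antimagic labeling of `G`: a bijection from the edge set onto
`{1, …, q}` (`q` the number of edges) whose induced vertex labels distinguish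
adjacent vertices. -/
def IsLocalAntimagic (G : SimpleGraph V) (f : Sym2 V → ℕ) : Prop :=
  Set.BijOn f G.edgeSet (Set.Icc 1 G.edgeSet.ncard) ∧
  ∀ ⦃u w : V⦄, G.Adj u w → fplus G f u ≠ fplus G f w

/-- The local antimagic chromatic number: the least number of distinct induced
vertex labels over all local antimagic labelings. -/
noncomputable def chiLA (G : SimpleGraph V) : ℕ :=
  sInf {c : ℕ | ∃ f : Sym2 V → ℕ, IsLocalAntimagic G f ∧ (Set.range (fplus G f)).ncard = c}

/-- `n` disjoint copies of the path `P₃`; in copy `i`, vertex `(i,0) = uᵢ`,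
`(i,1) = wᵢ`, `(i,2) = vᵢ`. -/
def nP3 (n : ℕ) : SimpleGraph (Fin n × Fin 3) :=
  SimpleGraph.fromRel (fun x y => x.1 = y.1 ∧ ((x.2 = 0 ∧ y.2 = 1) ∨ (x.2 = 1 ∧ y.2 = 2)))

/-- Join of two graphs on disjoint vertex sets. -/
def joinG {α β : Type*} (G : SimpleGraph α) (H : SimpleGraph β) : SimpleGraph (α ⊕ β) :=
  SimpleGraph.fromRel (fun x y =>
    match x, y with
    | Sum.inl a, Sum.inl b => G.Adj a b
    | Sum.inr a, Sum.inr b => H.Adj a b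
    | Sum.inl _, Sum.inr _ => True
    | Sum.inr _, Sum.inl _ => False)

/-- Disjoint union of two graphs. -/
def disjUnionG {α β : Type*} (G : SimpleGraph α) (H : SimpleGraph β) : SimpleGraph (α ⊕ β) :=
  SimpleGraph.fromRel (fun x y =>
    match x, y with
    | Sum.inl a, Sum.inl b => G.Adj a b
    | Sum.inr a, Sum.inr b => H.Adj a b
    | _, _ => False)

/-- `m` disjoint copies of `G`. -/
def copies (m : ℕ) (G : SimpleGraph V) : SimpleGraph (Fin m × V) :=
  SimpleGraph.fromRel (fun x y => x.1 = y.1 ∧ G.Adj x.2 y.2)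

/-- The fan blade graph `FB(n) = nP₃ ∨ O₁`. -/
def FB (n : ℕ) : SimpleGraph ((Fin n × Fin 3) ⊕ Fin 1) :=
  joinG (nP3 n) ⊥

/-- The graph obtained from `G` by merging vertices according to `p` (fibers of
`p` are merged into single vertices). -/
def mergeMap (G : SimpleGraph V) (p : V → W) : SimpleGraph W :=
  SimpleGraph.fromRel (fun a b => ∃ x y, G.Adj x y ∧ p x = a ∧ p y = b)

/-- No two distinct vertices of `S` are adjacent or share a common neighbor. -/
def NoCommon (G : SimpleGraph V) (S : Set V) : Prop :=
  ∀ x ∈ S, ∀ y ∈ S, x ≠ y → ¬ G.Adj x y ∧ ∀ z, ¬ (G.Adj x z ∧ G.Adj y z)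

/-- `P` is a partition of the set `S` into nonempty blocks. -/
def IsPartitionOn (S : Set V) (P : Set (Set V)) : Prop :=
  (∀ B ∈ P, B ⊆ S) ∧ (∀ v ∈ S, ∃! B, B ∈ P ∧ v ∈ B) ∧ ∀ B ∈ P, B.Nonempty

/-- `p` identifies exactly the vertices lying in a common block of `P`,
and nothing else; `p` is surjective so the codomain is exactly the merged
vertex set. -/
def IsMergeOf (P : Set (Set V)) (p : V → W) : Prop :=
  Function.Surjective p ∧ ∀ x y : V, p x = p y ↔ (x = y ∨ ∃ B ∈ P, x ∈ B ∧ y ∈ B)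


/-- The diamond fan `DF(2s)`: two copies (`c = 0,1`) of `sP₃`, plus two hub
vertices `y = Sum.inr 0` and `z = Sum.inr 1`; in copy `c`, blade `j`, position
`0,2` are the degree-1 endpoints and `1` the middle vertex of the path. -/
def DF2 (s : ℕ) : SimpleGraph ((Fin 2 × Fin s × Fin 3) ⊕ Fin 2) :=
  SimpleGraph.fromRel (fun x y =>
    match x, y with
    | Sum.inl a, Sum.inl b =>
        a.1 = b.1 ∧ a.2.1 = b.2.1 ∧ ((a.2.2 = 0 ∧ b.2.2 = 1) ∨ (a.2.2 = 1 ∧ b.2.2 = 2))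
    | Sum.inl a, Sum.inr j =>
        (j = 0 ∧ ((a.1 = 0 ∧ a.2.2 ≠ 1) ∨ (a.1 = 1 ∧ a.2.2 = 1))) ∨
        (j = 1 ∧ ((a.1 = 1 ∧ a.2.2 ≠ 1) ∨ (a.1 = 0 ∧ a.2.2 = 1)))
    | _, _ => False)

abbrev DFVert (r s : ℕ) :=
  (Fin r × ((Fin 2 × Fin s × Fin 3) ⊕ Fin 2)) ⊕ ((Fin s × Fin 3) ⊕ Fin 1)

/-- Peanut graph `Pt(n)`: `Sum.inl (i, 0) = u_{i+1}`, `Sum.inl (i, 1) = v_{i+1}`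
for `0 ≤ i ≤ 2n`, and `Sum.inr 0 = x`, `Sum.inr 1 = y`. -/
abbrev PtVert (n : ℕ) := (Fin (2*n+1) × Fin 2) ⊕ Fin 2

def Pt (n : ℕ) : SimpleGraph (PtVert n) :=
  SimpleGraph.fromRel (fun a b =>
    match a, b with
    | Sum.inl p, Sum.inl q =>
        (p.2 = q.2 ∧ (p.1 : ℕ) + 1 = (q.1 : ℕ)) ∨
        (p.1 = q.1 ∧ (p.1 : ℕ) % 2 = 0 ∧ p.2 = 0 ∧ q.2 = 1)
    | Sum.inr j, Sum.inl p => (j = 0 ∧ (p.1 : ℕ) = 0) ∨ (j = 1 ∧ (p.1 : ℕ) = 2*n)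
    | _, _ => False)

/-- Triangular bracelet `TB(n)`: `Sum.inl (j, 0) = u_{2j+1}`,
`Sum.inl (j, 1) = v_{2j+1}` for `0 ≤ j ≤ n`, and `Sum.inr j = z_{2j}`. -/
abbrev TBVert (n : ℕ) := (Fin (n+1) × Fin 2) ⊕ Fin (n+1)

def TB (n : ℕ) : SimpleGraph (TBVert n) :=
  SimpleGraph.fromRel (fun a b =>
    match a, b with
    | Sum.inl p, Sum.inl q => p.1 = q.1 ∧ p.2 = 0 ∧ q.2 = 1
    | Sum.inr j, Sum.inl p =>
        (p.1 : ℕ) = (j : ℕ) ∨ (p.1 : ℕ) + 1 = (j : ℕ) ∨ ((j : ℕ) = 0 ∧ (p.1 : ℕ) = n)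
    | _, _ => False)

/-- Disjoint union of an indexed family of graphs. -/
def sigmaG {ι : Type*} {Vf : ι → Type*} (G : ∀ a, SimpleGraph (Vf a)) :
    SimpleGraph (Σ a, Vf a) :=
  SimpleGraph.fromRel (fun x y =>
    ∃ h : x.1 = y.1, (G y.1).Adj (cast (congrArg Vf h) x.2) y.2)

/-- `FB¹(r,s)`: `Sum.inl (i,j) = w_{i,j}`, `Sum.inr (Sum.inl i) = xᵢ`,
`Sum.inr (Sum.inr (j,0)) = uⱼ`, `Sum.inr (Sum.inr (j,1)) = vⱼ`. -/
def FB1 (r s : ℕ) : SimpleGraph ((Fin r × Fin s) ⊕ (Fin r ⊕ (Fin s × Fin 2))) :=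
  SimpleGraph.fromRel (fun a b =>
    match a, b with
    | Sum.inl w, Sum.inr (Sum.inl x) => w.1 = x
    | Sum.inl w, Sum.inr (Sum.inr uv) => w.2 = uv.1
    | Sum.inr (Sum.inl _), Sum.inr (Sum.inr _) => True
    | _, _ => False)

/-- `FB²(r,s)`: `Sum.inl (i,j,0) = u_{i,j}`, `Sum.inl (i,j,1) = v_{i,j}`,
`Sum.inr (Sum.inl i) = xᵢ`, `Sum.inr (Sum.inr j) = wⱼ`. -/
def FB2 (r s : ℕ) : SimpleGraph ((Fin r × Fin s × Fin 2) ⊕ (Fin r ⊕ Fin s)) :=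
  SimpleGraph.fromRel (fun a b =>
    match a, b with
    | Sum.inl uv, Sum.inr (Sum.inl x) => uv.1 = x
    | Sum.inl uv, Sum.inr (Sum.inr w) => uv.2.1 = w
    | Sum.inr (Sum.inl _), Sum.inr (Sum.inr _) => True
    | _, _ => False)

/-!
The triangle `x u₁ v₁` forces at least three distinct vertex sums, so `χ_la(Pt n) ≥ 3`.
For `n = 2m`, label the `j`-th edge of the path `x u₁ ⋯ u_{2n+1} y` by `uLabel m j`, that of
`x v₁ ⋯ v_{2n+1} y` by `vLabel m j` (together `1, …, 8m+4`) and the `k`-th rung `u_{2k+1} v_{2k+1}`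
by `crossLabel m k` (the values `8m+5, …, 10m+5`). Consecutive path labels are arranged so that
every degree-2 vertex gets the sum `8m+5`, while the degree-3 vertices get `13m+8` or `21m+12`,
alternating along each path and across each rung. These three sums form a proper colouring.
-/

section ChromaticBounds

variable {G : SimpleGraph V} {f : Sym2 V → ℕ}

lemma IsLocalAntimagic.chiLA_le (hf : IsLocalAntimagic G f) :
    chiLA G ≤ (Set.range (fplus G f)).ncard :=
  Nat.sInf_le ⟨f, hf, rfl⟩

lemma IsLocalAntimagic.le_ncard_range_fplus [Finite V] (hf : IsLocalAntimagic G f) {k : ℕ}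
    {s : Finset V} (hs : G.IsNClique k s) : k ≤ (Set.range (fplus G f)).ncard := by
  have hinj : Set.InjOn (fplus G f) s := fun u hu w hw h => by
    by_contra hne
    exact hf.2 (hs.isClique hu hw hne) h
  rw [← hs.card_eq, ← Set.ncard_coe_finset, ← hinj.ncard_image]
  exact Set.ncard_le_ncard (Set.image_subset_range _ _)

lemma le_chiLA_of_isNClique [Finite V] {k : ℕ} {s : Finset V} (hs : G.IsNClique k s)
    (hex : ∃ f, IsLocalAntimagic G f) : k ≤ chiLA G := by
  obtain ⟨f, hf⟩ := hex
  exact le_csInf ⟨_, f, hf, rfl⟩ fun _ ⟨_, hf', hc⟩ => hc ▸ hf'.le_ncard_range_fplus hs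

variable {α : Type*} {g : α → ℕ}

lemma isLocalAntimagic_of_fplus_eq_comp (C : G.Coloring α) (hg : Function.Injective g)
    (hbij : Set.BijOn f G.edgeSet (Set.Icc 1 G.edgeSet.ncard)) (hf : fplus G f = g ∘ C) :
    IsLocalAntimagic G f :=
  ⟨hbij, fun _ _ h => by rw [hf]; exact hg.ne (C.valid h)⟩

lemma ncard_range_fplus_le_of_fplus_eq_comp [Finite α] (C : G.Coloring α)
    (hf : fplus G f = g ∘ C) : (Set.range (fplus G f)).ncard ≤ Nat.card α :=
  calc (Set.range (fplus G f)).ncard = (g '' Set.range C).ncard := by rw [hf, Set.range_comp]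
    _ ≤ (Set.range C).ncard := Set.ncard_image_le (Set.toFinite _)
    _ ≤ Nat.card α := Set.ncard_le_card _

end ChromaticBounds

section EdgeEnumeration

variable {ι : Type*} {G : SimpleGraph V} {e : ι → Sym2 V} (l : ι → ℕ)

lemma fplus_extend (he : Function.Injective e) (hrange : Set.range e = G.edgeSet) (v : V) :
    fplus G (Function.extend e l 0) v = ∑ᶠ k ∈ {k | v ∈ e k}, l k := by
  have hinc : G.incidenceSet v = e '' {k | v ∈ e k} := by
    ext x
    simp only [SimpleGraph.incidenceSet, ← hrange, Set.mem_ofPred_eq, Set.mem_image,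
      Set.mem_range]
    grind
  rw [fplus, hinc, finsum_mem_image he.injOn]
  simp only [he.extend_apply]

lemma bijOn_extend [Fintype ι] (he : Function.Injective e) (hrange : Set.range e = G.edgeSet)
    (hl : Function.Injective l) (hl_mem : ∀ k, l k ∈ Set.Icc 1 (Fintype.card ι)) :
    Set.BijOn (Function.extend e l 0) G.edgeSet (Set.Icc 1 G.edgeSet.ncard) := by
  rw [← hrange, Set.ncard_range_of_injective he, Nat.card_eq_fintype_card, ← Set.image_univ,
    ← Set.bijOn_comp_iff he.injOn, show Function.extend e l 0 ∘ e = l from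
      funext (he.extend_apply l 0)]
  have himage : l '' Set.univ ⊆ Set.Icc 1 (Fintype.card ι) := by
    rintro _ ⟨k, -, rfl⟩
    exact hl_mem k
  refine ⟨fun k _ => hl_mem k, hl.injOn, ?_⟩
  refine (Set.eq_of_subset_of_ncard_le himage ?_ (Set.finite_Icc _ _)).symm.subset
  rw [hl.injOn.ncard_image, Set.ncard_univ, Nat.card_eq_fintype_card, Set.ncard_eq_toFinset_card',
    Set.toFinset_Icc, Nat.card_Icc, Nat.add_sub_cancel]

end EdgeEnumeration

section PeanutEdges

variable {n : ℕ}

@[simp] lemma pt_adj_inl_inl {i i' : Fin (2*n+1)} {c c' : Fin 2} :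
    (Pt n).Adj (Sum.inl (i, c)) (Sum.inl (i', c')) ↔
      c = c' ∧ (i.val + 1 = i' ∨ i'.val + 1 = i) ∨ i = i' ∧ i.val % 2 = 0 ∧ c ≠ c' := by
  simp only [Pt, SimpleGraph.fromRel_adj]
  fin_cases c <;> fin_cases c' <;> simp [Fin.ext_iff] <;> omega

@[simp] lemma pt_adj_inr_inl {x : Fin 2} {i : Fin (2*n+1)} {c : Fin 2} :
    (Pt n).Adj (Sum.inr x) (Sum.inl (i, c)) ↔ x = 0 ∧ i.val = 0 ∨ x = 1 ∧ i.val = 2*n := by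
  simp [Pt]

@[simp] lemma pt_adj_inl_inr {x : Fin 2} {i : Fin (2*n+1)} {c : Fin 2} :
    (Pt n).Adj (Sum.inl (i, c)) (Sum.inr x) ↔ x = 0 ∧ i.val = 0 ∨ x = 1 ∧ i.val = 2*n := by
  rw [SimpleGraph.adj_comm, pt_adj_inr_inl]

@[simp] lemma pt_not_adj_inr_inr {x y : Fin 2} : ¬ (Pt n).Adj (Sum.inr x) (Sum.inr y) := by
  simp [Pt]

lemma pt_isNClique_three : (Pt n).IsNClique 3 {Sum.inr 0, Sum.inl (0, 0), Sum.inl (0, 1)} := by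
  simp [SimpleGraph.is3Clique_triple_iff]

variable (n) in
/-- The `j`-th vertex of the path `x w₁ ⋯ w_{2n+1} y`, where `w = u` for `c = 0` and `w = v` for
`c = 1`; indices beyond `2n+2` are clamped to `y`. -/
def pathVert (c : Fin 2) (j : ℕ) : PtVert n :=
  if j = 0 then Sum.inr 0 else if h : j ≤ 2*n+1 then Sum.inl (⟨j-1, by omega⟩, c) else Sum.inr 1

/-- `Sum.inl (c, j)` indexes the `j`-th edge of the path `pathVert n c`, and `Sum.inr k` the rung
`u_{2k+1} v_{2k+1}`. -/
abbrev PtEdgeIdx (n : ℕ) := (Fin 2 × Fin (2*n+2)) ⊕ Fin (n+1)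

variable (n) in
def ptEdge : PtEdgeIdx n → Sym2 (PtVert n)
  | Sum.inl (c, j) => s(pathVert n c j, pathVert n c (j+1))
  | Sum.inr k => s(Sum.inl (⟨2*k, by omega⟩, 0), Sum.inl (⟨2*k, by omega⟩, 1))

@[simp] lemma pathVert_eq_inl_iff {c c' : Fin 2} {j : ℕ} {i : Fin (2*n+1)} :
    pathVert n c j = Sum.inl (i, c') ↔ j = i + 1 ∧ c = c' := by
  unfold pathVert; split_ifs <;> simp [Prod.ext_iff, Fin.ext_iff] <;> omega

@[simp] lemma pathVert_eq_inr_zero_iff {c : Fin 2} {j : ℕ} :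
    pathVert n c j = Sum.inr 0 ↔ j = 0 := by
  unfold pathVert; split_ifs <;> simp <;> omega

@[simp] lemma pathVert_eq_inr_one_iff {c : Fin 2} {j : ℕ} :
    pathVert n c j = Sum.inr 1 ↔ 2*n+1 < j := by
  unfold pathVert; split_ifs <;> simp <;> omega

lemma ptEdge_injective : Function.Injective (ptEdge n) := by
  rintro (⟨c, j⟩ | k) (⟨c', j'⟩ | k') h <;> simp only [ptEdge, Sym2.eq_iff] at h
  · unfold pathVert at h
    fin_cases c <;> fin_cases c' <;> split_ifs at h <;> simp [Fin.ext_iff] at h ⊢ <;> omega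
  · unfold pathVert at h
    split_ifs at h <;> simp at h
    omega
  · unfold pathVert at h
    split_ifs at h <;> simp at h
    omega
  · simp only [Sum.inl.injEq, Prod.mk.injEq, Fin.mk.injEq] at h
    exact congrArg _ (Fin.ext (by omega))

lemma pt_adj_pathVert_succ (c : Fin 2) {j : ℕ} (hj : j ≤ 2*n+1) :
    (Pt n).Adj (pathVert n c j) (pathVert n c (j+1)) := by
  unfold pathVert
  split_ifs <;> simp_all <;> omega

lemma ptEdge_mem_edgeSet (k : PtEdgeIdx n) : ptEdge n k ∈ (Pt n).edgeSet := by
  rcases k with ⟨c, j⟩ | k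
  · exact pt_adj_pathVert_succ c (Nat.lt_succ_iff.1 j.isLt)
  · simp [ptEdge]

lemma mk_mem_range_ptEdge {a b : PtVert n} (h : (Pt n).Adj a b) :
    s(a, b) ∈ Set.range (ptEdge n) := by
  rcases a with ⟨i, c⟩ | x <;> rcases b with ⟨i', c'⟩ | y
  · simp only [pt_adj_inl_inl] at h
    rcases h with ⟨rfl, h | h⟩ | ⟨rfl, hev, hc⟩
    · exact ⟨Sum.inl (c, i.succ), by simp [ptEdge]; omega⟩
    · exact ⟨Sum.inl (c, i'.succ), by simp [ptEdge]; omega⟩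
    · refine ⟨Sum.inr ⟨i / 2, by omega⟩, ?_⟩
      fin_cases c <;> fin_cases c' <;> simp_all [ptEdge, Fin.ext_iff] <;> omega
  · simp only [pt_adj_inl_inr] at h
    rcases h with ⟨rfl, h⟩ | ⟨rfl, h⟩
    · exact ⟨Sum.inl (c, i.castSucc), by simp [ptEdge]; exact Fin.ext h⟩
    · exact ⟨Sum.inl (c, i.succ), by simp [ptEdge]; omega⟩
  · simp only [pt_adj_inr_inl] at h
    rcases h with ⟨rfl, h⟩ | ⟨rfl, h⟩
    · exact ⟨Sum.inl (c', i'.castSucc), by simp [ptEdge]; exact Fin.ext h⟩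
    · exact ⟨Sum.inl (c', i'.succ), by simp [ptEdge]; omega⟩
  · exact absurd h pt_not_adj_inr_inr

lemma range_ptEdge : Set.range (ptEdge n) = (Pt n).edgeSet := by
  refine subset_antisymm (Set.range_subset_iff.2 ptEdge_mem_edgeSet) fun e he => ?_
  induction e using Sym2.ind with
  | _ a b => exact mk_mem_range_ptEdge he

lemma mem_ptEdge_inl_iff {i : Fin (2*n+1)} {c : Fin 2} {k : PtEdgeIdx n} :
    Sum.inl (i, c) ∈ ptEdge n k ↔ k = Sum.inl (c, i.castSucc) ∨ k = Sum.inl (c, i.succ) ∨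
      ∃ k', k = Sum.inr k' ∧ 2 * k'.val = i := by
  rcases k with ⟨c', j⟩ | k
  · simp only [ptEdge, Sym2.mem_iff, eq_comm (a := Sum.inl (i, c)), pathVert_eq_inl_iff]
    simp [Fin.ext_iff]
    omega
  · simp only [ptEdge, Sym2.mem_iff, Sum.inl.injEq, Prod.mk.injEq, reduceCtorEq, Sum.inr.injEq,
      false_or, exists_eq_left']
    fin_cases c <;> simp [Fin.ext_iff] <;> omega

lemma mem_ptEdge_inr_zero_iff {k : PtEdgeIdx n} :
    Sum.inr 0 ∈ ptEdge n k ↔ k = Sum.inl (0, 0) ∨ k = Sum.inl (1, 0) := by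
  rcases k with ⟨c, j⟩ | k
  · simp only [ptEdge, Sym2.mem_iff, eq_comm (a := Sum.inr (0 : Fin 2)), pathVert_eq_inr_zero_iff]
    fin_cases c <;> simp
  · simp [ptEdge]

lemma mem_ptEdge_inr_one_iff {k : PtEdgeIdx n} :
    Sum.inr 1 ∈ ptEdge n k ↔ k = Sum.inl (0, Fin.last _) ∨ k = Sum.inl (1, Fin.last _) := by
  rcases k with ⟨c, j⟩ | k
  · simp only [ptEdge, Sym2.mem_iff, eq_comm (a := Sum.inr (1 : Fin 2)), pathVert_eq_inr_one_iff]
    fin_cases c <;> simp [Fin.ext_iff] <;> omega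
  · simp [ptEdge]

end PeanutEdges

section PeanutLabeling

variable {n : ℕ}

noncomputable def ptLabeling (l : PtEdgeIdx n → ℕ) : Sym2 (PtVert n) → ℕ :=
  Function.extend (ptEdge n) l 0

variable (l : PtEdgeIdx n → ℕ)

lemma fplus_ptLabeling (v : PtVert n) :
    fplus (Pt n) (ptLabeling l) v = ∑ᶠ k ∈ {k | v ∈ ptEdge n k}, l k :=
  fplus_extend l ptEdge_injective range_ptEdge v

lemma fplus_ptLabeling_inl_of_even {i : Fin (2*n+1)} (hi : i.val % 2 = 0) (c : Fin 2) :
    fplus (Pt n) (ptLabeling l) (Sum.inl (i, c)) =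
      l (Sum.inl (c, i.castSucc)) + l (Sum.inl (c, i.succ)) + l (Sum.inr ⟨i / 2, by omega⟩) := by
  have hset : {k | Sum.inl (i, c) ∈ ptEdge n k} =
      {Sum.inl (c, i.castSucc), Sum.inl (c, i.succ), Sum.inr ⟨i / 2, by omega⟩} := by
    ext k
    simp only [Set.mem_ofPred_eq, mem_ptEdge_inl_iff, Set.mem_insert_iff, Set.mem_singleton_iff]
    rcases k with _ | k
    · simp
    · simp only [reduceCtorEq, false_or, Sum.inr.injEq, exists_eq_left']
      simp only [Fin.ext_iff]
      omega
  rw [fplus_ptLabeling, hset, finsum_mem_insert _ (by simp [Fin.ext_iff]) (Set.toFinite _),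
    finsum_mem_pair (by simp), ← add_assoc]

lemma fplus_ptLabeling_inl_of_odd {i : Fin (2*n+1)} (hi : i.val % 2 = 1) (c : Fin 2) :
    fplus (Pt n) (ptLabeling l) (Sum.inl (i, c)) =
      l (Sum.inl (c, i.castSucc)) + l (Sum.inl (c, i.succ)) := by
  have hset : {k | Sum.inl (i, c) ∈ ptEdge n k} = {Sum.inl (c, i.castSucc), Sum.inl (c, i.succ)} := by
    ext k
    simp only [Set.mem_ofPred_eq, mem_ptEdge_inl_iff, Set.mem_insert_iff, Set.mem_singleton_iff]
    rcases k with _ | k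
    · simp
    · simp only [reduceCtorEq, false_or, Sum.inr.injEq, exists_eq_left', iff_false]
      omega
  rw [fplus_ptLabeling, hset, finsum_mem_pair (by simp [Fin.ext_iff])]

lemma fplus_ptLabeling_inr_zero :
    fplus (Pt n) (ptLabeling l) (Sum.inr 0) = l (Sum.inl (0, 0)) + l (Sum.inl (1, 0)) := by
  have hset : {k | Sum.inr 0 ∈ ptEdge n k} = {Sum.inl (0, 0), Sum.inl (1, 0)} := by
    ext k; exact mem_ptEdge_inr_zero_iff
  rw [fplus_ptLabeling, hset, finsum_mem_pair (by simp)]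

lemma fplus_ptLabeling_inr_one :
    fplus (Pt n) (ptLabeling l) (Sum.inr 1) =
      l (Sum.inl (0, Fin.last _)) + l (Sum.inl (1, Fin.last _)) := by
  have hset : {k | Sum.inr 1 ∈ ptEdge n k} = {Sum.inl (0, Fin.last _), Sum.inl (1, Fin.last _)} := by
    ext k; exact mem_ptEdge_inr_one_iff
  rw [fplus_ptLabeling, hset, finsum_mem_pair (by simp)]

end PeanutLabeling

section PeanutColoring

variable {n : ℕ}

def ptColor : PtVert n → Fin 3
  | Sum.inr _ => 0
  | Sum.inl (i, c) => if i.val % 2 = 1 then 0 else if (i.val / 2 + c.val) % 2 = 0 then 1 else 2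

variable (n) in
def ptColoring : (Pt n).Coloring (Fin 3) :=
  SimpleGraph.Coloring.mk ptColor fun {u w} h => by
    rcases u with ⟨i, c⟩ | x <;> rcases w with ⟨i', c'⟩ | y
    · simp only [pt_adj_inl_inl] at h
      simp only [ptColor]
      rcases h with ⟨rfl, h⟩ | ⟨rfl, hev, hc⟩
      · split_ifs <;> simp <;> omega
      · fin_cases c <;> fin_cases c' <;> simp at hc ⊢ <;> split_ifs <;> simp <;> omega
    · simp only [pt_adj_inl_inr] at h
      simp only [ptColor]
      split_ifs
      · omega
      all_goals decide
    · simp only [pt_adj_inr_inl] at h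
      simp only [ptColor]
      split_ifs
      · omega
      all_goals decide
    · exact absurd h pt_not_adj_inr_inr

end PeanutColoring

section PeanutLabels

def uLabel (m j : ℕ) : ℕ :=
  if j % 4 = 0 then m + 1 - j / 4
  else if j % 4 = 1 then 4*m + 2 - j / 4
  else if j % 4 = 2 then 4*m + 3 + j / 4
  else 7*m + 5 + j / 4

def vLabel (m j : ℕ) : ℕ :=
  if j % 4 = 0 then 7*m + 4 - j / 4
  else if j % 4 = 1 then 6*m + 3 - j / 4
  else if j % 4 = 2 then 2*m + 2 + j / 4
  else m + 2 + j / 4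

def crossLabel (m k : ℕ) : ℕ := if k % 2 = 0 then 8*m + 5 + k else 10*m + 5 - k

def ptLabel (m : ℕ) : PtEdgeIdx (2*m) → ℕ
  | Sum.inl (c, j) => if c = 0 then uLabel m j else vLabel m j
  | Sum.inr k => crossLabel m k

def colorSum (m : ℕ) : Fin 3 → ℕ := ![8*m + 5, 13*m + 8, 21*m + 12]

variable (m : ℕ)

lemma card_ptEdgeIdx : Fintype.card (PtEdgeIdx (2*m)) = 10*m + 5 := by
  simp; ring

lemma ptLabel_inl_mem_Icc (c : Fin 2) (j : Fin (2*(2*m)+2)) :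
    ptLabel m (Sum.inl (c, j)) ∈ Set.Icc 1 (8*m + 4) := by
  have := j.isLt
  fin_cases c <;> simp [ptLabel, uLabel, vLabel] <;> split_ifs <;> omega

lemma ptLabel_inr_mem_Icc (k : Fin (2*m+1)) :
    ptLabel m (Sum.inr k) ∈ Set.Icc (8*m + 5) (10*m + 5) := by
  have := k.isLt
  simp only [ptLabel, crossLabel, Set.mem_Icc]
  split_ifs <;> omega

lemma ptLabel_injective : Function.Injective (ptLabel m) := by
  rintro (⟨c, j⟩ | k) (⟨c', j'⟩ | k') h
  · have := j.isLt; have := j'.isLt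
    fin_cases c <;> fin_cases c' <;>
      simp [ptLabel, uLabel, vLabel, Fin.ext_iff] at h ⊢ <;> split_ifs at h <;> omega
  · have := ptLabel_inl_mem_Icc m c j; have := ptLabel_inr_mem_Icc m k'
    simp only [Set.mem_Icc] at *; omega
  · have := ptLabel_inr_mem_Icc m k; have := ptLabel_inl_mem_Icc m c' j'
    simp only [Set.mem_Icc] at *; omega
  · have := k.isLt; have := k'.isLt
    simp only [ptLabel, crossLabel] at h
    simp only [Sum.inr.injEq, Fin.ext_iff]
    split_ifs at h <;> omega

lemma ptLabel_mem_Icc (k : PtEdgeIdx (2*m)) :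
    ptLabel m k ∈ Set.Icc 1 (Fintype.card (PtEdgeIdx (2*m))) := by
  rw [card_ptEdgeIdx]
  rcases k with ⟨c, j⟩ | k
  · exact Set.Icc_subset_Icc le_rfl (by omega) (ptLabel_inl_mem_Icc m c j)
  · exact Set.Icc_subset_Icc (by omega) le_rfl (ptLabel_inr_mem_Icc m k)

lemma colorSum_injective : Function.Injective (colorSum m) := by
  intro a b h
  fin_cases a <;> fin_cases b <;> simp [colorSum] at h ⊢ <;> omega

lemma uLabel_add_uLabel_of_odd {i : ℕ} (hi : i % 2 = 1) (him : i ≤ 4*m) :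
    uLabel m i + uLabel m (i + 1) = 8*m + 5 := by
  unfold uLabel; split_ifs <;> omega

lemma vLabel_add_vLabel_of_odd {i : ℕ} (hi : i % 2 = 1) (him : i ≤ 4*m) :
    vLabel m i + vLabel m (i + 1) = 8*m + 5 := by
  unfold vLabel; split_ifs <;> omega

lemma uLabel_add_uLabel_add_crossLabel {i : ℕ} (hi : i % 2 = 0) (him : i ≤ 4*m) :
    uLabel m i + uLabel m (i + 1) + crossLabel m (i / 2) =
      if i / 2 % 2 = 0 then 13*m + 8 else 21*m + 12 := by
  unfold uLabel crossLabel; split_ifs <;> omega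

lemma vLabel_add_vLabel_add_crossLabel {i : ℕ} (hi : i % 2 = 0) (him : i ≤ 4*m) :
    vLabel m i + vLabel m (i + 1) + crossLabel m (i / 2) =
      if i / 2 % 2 = 0 then 21*m + 12 else 13*m + 8 := by
  unfold vLabel crossLabel; split_ifs <;> omega

lemma uLabel_add_vLabel_zero : uLabel m 0 + vLabel m 0 = 8*m + 5 := by
  simp [uLabel, vLabel]; omega

lemma uLabel_add_vLabel_last : uLabel m (2*(2*m) + 1) + vLabel m (2*(2*m) + 1) = 8*m + 5 := by
  unfold uLabel vLabel; split_ifs <;> omega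

lemma fplus_ptLabeling_ptLabel :
    fplus (Pt (2*m)) (ptLabeling (ptLabel m)) = colorSum m ∘ ptColor := by
  funext v
  rcases v with ⟨i, c⟩ | x
  · have him : i.val ≤ 4*m := by omega
    rcases Nat.mod_two_eq_zero_or_one i with hi | hi
    · rw [fplus_ptLabeling_inl_of_even _ hi]
      fin_cases c
      · simp [ptLabel, uLabel_add_uLabel_add_crossLabel m hi him, ptColor, hi]
        split_ifs <;> rfl
      · simp [ptLabel, vLabel_add_vLabel_add_crossLabel m hi him, ptColor, hi]
        split_ifs <;> first | rfl | omega
    · rw [fplus_ptLabeling_inl_of_odd _ hi]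
      fin_cases c
      · simp [ptLabel, uLabel_add_uLabel_of_odd m hi him, ptColor, hi, colorSum]
      · simp [ptLabel, vLabel_add_vLabel_of_odd m hi him, ptColor, hi, colorSum]
  · fin_cases x
    · simp [fplus_ptLabeling_inr_zero, ptLabel, uLabel_add_vLabel_zero, ptColor, colorSum]
    · simp [fplus_ptLabeling_inr_one, ptLabel, uLabel_add_vLabel_last, ptColor, colorSum]

end PeanutLabels

theorem chiLA_Pt_general (n : ℕ) (heven : Even n) : chiLA (Pt n) = 3 := by
  obtain ⟨m, rfl⟩ := heven.two_dvd
  have hla : IsLocalAntimagic (Pt (2*m)) (ptLabeling (ptLabel m)) :=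
    isLocalAntimagic_of_fplus_eq_comp (ptColoring (2*m)) (colorSum_injective m)
      (bijOn_extend (ptLabel m) ptEdge_injective range_ptEdge (ptLabel_injective m)
        (ptLabel_mem_Icc m))
      (fplus_ptLabeling_ptLabel m)
  refine le_antisymm ?_ (le_chiLA_of_isNClique pt_isNClique_three ⟨_, hla⟩)
  simpa using hla.chiLA_le.trans
    (ncard_range_fplus_le_of_fplus_eq_comp (ptColoring (2*m)) (fplus_ptLabeling_ptLabel m))

/-- For every even `n ≥ 2`, `χ_{la}(Pt(n)) = 3`. -/
theorem chiLA_Pt (n : ℕ) (heven : Even n) (hn : 2 ≤ n) : chiLA (Pt n) = 3 :=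
  chiLA_Pt_general n heven

end LocalAntimagic
end

section
/- For every even integer n ≥ 2, the local antimagic chromatic number of the triangular bracelet TB(n) equals 3, i.e., χ_la(TB(n)) = 3. -/
namespace LocalAntimagic

variable {V W : Type*}

variable {n : ℕ}

def lab (n j r : ℕ) : ℕ :=
  if r = 0 then (if j % 2 = 0 then n + 1 - j else j + 1)
  else if r = 1 then (if j % 2 = 0 then 5*(n/2)+3 + j/2 else 4*(n/2)+2 - j/2)
  else if r = 2 then (if j % 2 = 0 then 7*(n/2)+4 + j/2 else 10*(n/2)+5 - j/2)
  else if r = 3 then (if j % 2 = 0 then 2*(n/2)+2 + j/2 else 5*(n/2)+2 - j/2)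
  else (if j % 2 = 0 then 8*(n/2)+5 + j/2 else 7*(n/2)+3 - j/2)
def eo (n : ℕ) : TBVert n → TBVert n → ℕ
  | Sum.inl p, Sum.inl q =>
      if p.1 = q.1 ∧ p.2 = 0 ∧ q.2 = 1 then lab n p.1 0 else 0
  | Sum.inr k, Sum.inl p =>
      if (k : ℕ) = (p.1 : ℕ) then (if p.2 = 0 then lab n p.1 1 else lab n p.1 2)
      else if ((p.1 : ℕ) + 1) % (n+1) = (k : ℕ) then
        (if p.2 = 0 then lab n p.1 3 else lab n p.1 4)
      else 0
  | _, _ => 0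
def fTB (n : ℕ) : Sym2 (TBVert n) → ℕ :=
  Sym2.lift ⟨fun x y => eo n x y + eo n y x, fun _ _ => Nat.add_comm _ _⟩
def emap (n : ℕ) (x : Fin (n+1) × Fin 5) : Sym2 (TBVert n) :=
  if x.2 = 0 then s(Sum.inl (x.1, 0), Sum.inl (x.1, 1))
  else if x.2 = 1 then s(Sum.inr x.1, Sum.inl (x.1, 0))
  else if x.2 = 2 then s(Sum.inr x.1, Sum.inl (x.1, 1))
  else if x.2 = 3 then s(Sum.inr (x.1 + 1), Sum.inl (x.1, 0))
  else s(Sum.inr (x.1 + 1), Sum.inl (x.1, 1))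
variable {n : ℕ}
lemma val_add_one (j : Fin (n+1)) : ((j + 1 : Fin (n+1)) : ℕ) = ((j : ℕ) + 1) % (n+1) := by
  rw [Fin.val_add, Fin.val_one']
  conv_rhs => rw [Nat.add_mod, Nat.mod_eq_of_lt j.isLt]
lemma mod_succ {j : ℕ} (h : j ≤ n) : (j+1) % (n+1) = if j = n then 0 else j+1 := by
  split_ifs with h0
  · subst h0; exact Nat.mod_self _
  · exact Nat.mod_eq_of_lt (by omega)
lemma TB_adj_ll {p q : Fin (n+1) × Fin 2} :
    (TB n).Adj (Sum.inl p) (Sum.inl q) ↔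
      p.1 = q.1 ∧ ((p.2 = 0 ∧ q.2 = 1) ∨ (p.2 = 1 ∧ q.2 = 0)) := by
  rw [TB, SimpleGraph.fromRel_adj]
  constructor
  · rintro ⟨hne, (⟨h1, h2, h3⟩ | ⟨h1, h2, h3⟩)⟩
    · exact ⟨h1, Or.inl ⟨h2, h3⟩⟩
    · exact ⟨h1.symm, Or.inr ⟨h3, h2⟩⟩
  · rintro ⟨h1, (⟨h2, h3⟩ | ⟨h2, h3⟩)⟩
    · exact ⟨by simp [Prod.ext_iff, h2, h3], Or.inl ⟨h1, h2, h3⟩⟩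
    · exact ⟨by simp [Prod.ext_iff, h2, h3], Or.inr ⟨h1.symm, h3, h2⟩⟩
lemma TB_adj_rl {k : Fin (n+1)} {p : Fin (n+1) × Fin 2} :
    (TB n).Adj (Sum.inr k) (Sum.inl p) ↔
      ((p.1 : ℕ) = (k : ℕ) ∨ (p.1 : ℕ) + 1 = (k : ℕ) ∨ ((k : ℕ) = 0 ∧ (p.1 : ℕ) = n)) := by
  rw [TB, SimpleGraph.fromRel_adj]
  constructor
  · rintro ⟨hne, (h | h)⟩
    · exact h
    · exact h.elim
  · intro h
    exact ⟨by simp, Or.inl h⟩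
lemma TB_adj_rr {k k' : Fin (n+1)} : ¬ (TB n).Adj (Sum.inr k) (Sum.inr k') := by
  rw [TB, SimpleGraph.fromRel_adj]
  rintro ⟨hne, (h | h)⟩ <;> exact h
lemma TB_adj_lr {k : Fin (n+1)} {p : Fin (n+1) × Fin 2} :
    (TB n).Adj (Sum.inl p) (Sum.inr k) ↔
      ((p.1 : ℕ) = (k : ℕ) ∨ (p.1 : ℕ) + 1 = (k : ℕ) ∨ ((k : ℕ) = 0 ∧ (p.1 : ℕ) = n)) := by
  rw [SimpleGraph.adj_comm]; exact TB_adj_rl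

-- NEW PART
lemma succ_eq_of_val (hn : 1 ≤ n) {j k : Fin (n+1)}
    (h : (j : ℕ) + 1 = (k : ℕ) ∨ ((k : ℕ) = 0 ∧ (j : ℕ) = n)) : j + 1 = k := by
  have hj1 : (j:ℕ) ≤ n := Nat.le_of_lt_succ j.isLt
  apply Fin.ext
  rw [val_add_one, mod_succ hj1]
  rcases h with h | ⟨h1, h2⟩
  · have : (j:ℕ) ≠ n := by have := k.isLt; omega
    simp [this, h]
  · simp [h2, h1]
lemma emap_mem (hn : 1 ≤ n) (a : Fin (n+1) × Fin 5) : emap n a ∈ (TB n).edgeSet := by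
  obtain ⟨j, r⟩ := a
  have hj1 : (j:ℕ) ≤ n := Nat.le_of_lt_succ j.isLt
  have hadd := val_add_one j
  fin_cases r
  · show s(Sum.inl (j,0), Sum.inl (j,1)) ∈ (TB n).edgeSet
    rw [SimpleGraph.mem_edgeSet, TB_adj_ll]; simp
  · show s(Sum.inr j, Sum.inl (j,0)) ∈ (TB n).edgeSet
    rw [SimpleGraph.mem_edgeSet, TB_adj_rl]; left; rfl
  · show s(Sum.inr j, Sum.inl (j,1)) ∈ (TB n).edgeSet
    rw [SimpleGraph.mem_edgeSet, TB_adj_rl]; left; rfl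
  · show s(Sum.inr (j+1), Sum.inl (j,0)) ∈ (TB n).edgeSet
    rw [SimpleGraph.mem_edgeSet, TB_adj_rl]
    rw [hadd, mod_succ hj1]
    split_ifs with h0
    · right; right; exact ⟨rfl, h0⟩
    · right; left; rfl
  · show s(Sum.inr (j+1), Sum.inl (j,1)) ∈ (TB n).edgeSet
    rw [SimpleGraph.mem_edgeSet, TB_adj_rl]
    rw [hadd, mod_succ hj1]
    split_ifs with h0
    · right; right; exact ⟨rfl, h0⟩
    · right; left; rfl


lemma edgeSet_TB (hn : 1 ≤ n) :
    (TB n).edgeSet = ↑((Finset.univ : Finset (Fin (n+1) × Fin 5)).image (emap n)) := by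
  apply Set.eq_of_subset_of_subset
  · intro e he
    induction e using Sym2.ind with
    | _ x y =>
      rw [SimpleGraph.mem_edgeSet] at he
      simp only [Finset.coe_image, Finset.coe_univ, Set.image_univ, Set.mem_range]
      rcases x with p | k
      · rcases y with q | k'
        · obtain ⟨j, i⟩ := p
          obtain ⟨j', i'⟩ := q
          rw [TB_adj_ll] at he
          obtain ⟨h1, (⟨h2, h3⟩ | ⟨h2, h3⟩)⟩ := he <;> dsimp at h1 h2 h3 <;> subst h1 h2 h3
          · exact ⟨(j, 0), by simp [emap]⟩
          · exact ⟨(j, 0), by simp [emap, Sym2.eq_swap]⟩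
        · obtain ⟨j, i⟩ := p
          rw [TB_adj_lr] at he
          rcases he with h | h
          · have hjk : j = k' := Fin.ext h
            subst hjk
            fin_cases i
            · exact ⟨(j, 1), by simp [emap, Sym2.eq_swap]⟩
            · exact ⟨(j, 2), by simp [emap, Sym2.eq_swap]⟩
          · have hjk : j + 1 = k' := succ_eq_of_val hn h
            subst hjk
            fin_cases i
            · exact ⟨(j, 3), by simp [emap, Sym2.eq_swap]⟩
            · exact ⟨(j, 4), by simp [emap, Sym2.eq_swap]⟩
      · rcases y with q | k'
        · obtain ⟨j, i⟩ := q
          rw [TB_adj_rl] at he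
          rcases he with h | h
          · have hjk : j = k := Fin.ext h
            subst hjk
            fin_cases i
            · exact ⟨(j, 1), by simp [emap]⟩
            · exact ⟨(j, 2), by simp [emap]⟩
          · have hjk : j + 1 = k := succ_eq_of_val hn h
            subst hjk
            fin_cases i
            · exact ⟨(j, 3), by simp [emap]⟩
            · exact ⟨(j, 4), by simp [emap]⟩
        · exact absurd he TB_adj_rr
  · intro e he
    simp only [Finset.coe_image, Finset.coe_univ, Set.image_univ, Set.mem_range] at he
    obtain ⟨a, rfl⟩ := he
    exact emap_mem hn a

lemma fTB_emap (hn : 1 ≤ n) (j : Fin (n+1)) (r : Fin 5) :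
    fTB n (emap n (j, r)) = lab n (j : ℕ) (r : ℕ) := by
  have hj1 : (j:ℕ) ≤ n := Nat.le_of_lt_succ j.isLt
  have hadd := val_add_one j
  have hne : ((j+1 : Fin (n+1)) : ℕ) ≠ (j : ℕ) := by
    rw [hadd, mod_succ hj1]; split_ifs <;> omega
  have hne2 : ((j : ℕ) + 1) % (n+1) ≠ (j : ℕ) := by
    rw [mod_succ hj1]; split_ifs <;> omega
  fin_cases r
  · show fTB n s(Sum.inl (j,0), Sum.inl (j,1)) = lab n (j:ℕ) 0
    simp [fTB, eo]
  · show fTB n s(Sum.inr j, Sum.inl (j,0)) = lab n (j:ℕ) 1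
    simp [fTB, eo]
  · show fTB n s(Sum.inr j, Sum.inl (j,1)) = lab n (j:ℕ) 2
    simp [fTB, eo]
  · show fTB n s(Sum.inr (j+1), Sum.inl (j,0)) = lab n (j:ℕ) 3
    simp [fTB, eo, hne, hadd, hne2]
  · show fTB n s(Sum.inr (j+1), Sum.inl (j,1)) = lab n (j:ℕ) 4
    simp [fTB, eo, hne, hadd, hne2]
lemma emap0 (j : Fin (n+1)) : emap n (j, 0) = s(Sum.inl (j,0), Sum.inl (j,1)) := rfl
lemma emap1 (j : Fin (n+1)) : emap n (j, 1) = s(Sum.inr j, Sum.inl (j,0)) := rfl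
lemma emap2 (j : Fin (n+1)) : emap n (j, 2) = s(Sum.inr j, Sum.inl (j,1)) := rfl
lemma emap3 (j : Fin (n+1)) : emap n (j, 3) = s(Sum.inr (j+1), Sum.inl (j,0)) := rfl
lemma emap4 (j : Fin (n+1)) : emap n (j, 4) = s(Sum.inr (j+1), Sum.inl (j,1)) := rfl

lemma fin_ne_succ (hn : 1 ≤ n) (j : Fin (n+1)) : j ≠ j + 1 := by
  have hj1 : (j:ℕ) ≤ n := Nat.le_of_lt_succ j.isLt
  intro h
  have := val_add_one j
  rw [← h, mod_succ hj1] at this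
  split_ifs at this <;> omega

lemma mem_inc {G : SimpleGraph V} {v : V} {e : Sym2 V} :
    e ∈ G.incidenceSet v ↔ e ∈ G.edgeSet ∧ v ∈ e := Iff.rfl

lemma inc_u0 (hn : 1 ≤ n) (j : Fin (n+1)) :
    (TB n).incidenceSet (Sum.inl (j, 0)) =
      {emap n (j, 0), emap n (j, 1), emap n (j, 3)} := by
  ext e
  rw [mem_inc]
  constructor
  · rintro ⟨he, hv⟩
    rw [edgeSet_TB hn] at he
    simp only [Finset.coe_image, Finset.coe_univ, Set.image_univ, Set.mem_range] at he
    obtain ⟨⟨j', r'⟩, rfl⟩ := he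
    fin_cases r'
    · have hv' : Sum.inl (j, 0) ∈ s(Sum.inl ((j',0) : Fin (n+1) × Fin 2), Sum.inl (j',1)) := hv
      rw [Sym2.mem_iff] at hv'
      rcases hv' with h | h <;> rw [Sum.inl.injEq, Prod.mk.injEq] at h <;> obtain ⟨rfl, h2⟩ := h
      · exact Set.mem_insert _ _
      · exact absurd h2 (by decide)
    · have hv' : Sum.inl (j, 0) ∈ s(Sum.inr j' , Sum.inl ((j',0) : Fin (n+1) × Fin 2)) := hv
      rw [Sym2.mem_iff] at hv'
      rcases hv' with h | h
      · exact absurd h (by simp)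
      · rw [Sum.inl.injEq, Prod.mk.injEq] at h
        obtain ⟨rfl, h2⟩ := h
        exact Set.mem_insert_of_mem _ (Set.mem_insert _ _)
    · have hv' : Sum.inl (j, 0) ∈ s(Sum.inr j' , Sum.inl ((j',1) : Fin (n+1) × Fin 2)) := hv
      rw [Sym2.mem_iff] at hv'
      rcases hv' with h | h
      · exact absurd h (by simp)
      · rw [Sum.inl.injEq, Prod.mk.injEq] at h
        exact absurd h.2 (by decide)
    · have hv' : Sum.inl (j, 0) ∈ s(Sum.inr (j'+1) , Sum.inl ((j',0) : Fin (n+1) × Fin 2)) := hv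
      rw [Sym2.mem_iff] at hv'
      rcases hv' with h | h
      · exact absurd h (by simp)
      · rw [Sum.inl.injEq, Prod.mk.injEq] at h
        obtain ⟨rfl, h2⟩ := h
        exact Set.mem_insert_of_mem _ (Set.mem_insert_of_mem _ rfl)
    · have hv' : Sum.inl (j, 0) ∈ s(Sum.inr (j'+1) , Sum.inl ((j',1) : Fin (n+1) × Fin 2)) := hv
      rw [Sym2.mem_iff] at hv'
      rcases hv' with h | h
      · exact absurd h (by simp)
      · rw [Sum.inl.injEq, Prod.mk.injEq] at h
        exact absurd h.2 (by decide)
  · intro hm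
    rcases hm with rfl | rfl | rfl
    · exact ⟨emap_mem hn (j,0), by rw [emap0]; simp⟩
    · exact ⟨emap_mem hn (j,1), by rw [emap1]; simp⟩
    · exact ⟨emap_mem hn (j,3), by rw [emap3]; simp⟩

lemma inc_u1 (hn : 1 ≤ n) (j : Fin (n+1)) :
    (TB n).incidenceSet (Sum.inl (j, 1)) =
      {emap n (j, 0), emap n (j, 2), emap n (j, 4)} := by
  ext e
  rw [mem_inc]
  constructor
  · rintro ⟨he, hv⟩
    rw [edgeSet_TB hn] at he
    simp only [Finset.coe_image, Finset.coe_univ, Set.image_univ, Set.mem_range] at he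
    obtain ⟨⟨j', r'⟩, rfl⟩ := he
    fin_cases r'
    · have hv' : Sum.inl (j, 1) ∈ s(Sum.inl ((j',0) : Fin (n+1) × Fin 2), Sum.inl (j',1)) := hv
      rw [Sym2.mem_iff] at hv'
      rcases hv' with h | h <;> rw [Sum.inl.injEq, Prod.mk.injEq] at h <;> obtain ⟨rfl, h2⟩ := h
      · exact absurd h2 (by decide)
      · exact Set.mem_insert _ _
    · have hv' : Sum.inl (j, 1) ∈ s(Sum.inr j' , Sum.inl ((j',0) : Fin (n+1) × Fin 2)) := hv
      rw [Sym2.mem_iff] at hv'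
      rcases hv' with h | h
      · exact absurd h (by simp)
      · rw [Sum.inl.injEq, Prod.mk.injEq] at h
        exact absurd h.2 (by decide)
    · have hv' : Sum.inl (j, 1) ∈ s(Sum.inr j' , Sum.inl ((j',1) : Fin (n+1) × Fin 2)) := hv
      rw [Sym2.mem_iff] at hv'
      rcases hv' with h | h
      · exact absurd h (by simp)
      · rw [Sum.inl.injEq, Prod.mk.injEq] at h
        obtain ⟨rfl, h2⟩ := h
        exact Set.mem_insert_of_mem _ (Set.mem_insert _ _)
    · have hv' : Sum.inl (j, 1) ∈ s(Sum.inr (j'+1) , Sum.inl ((j',0) : Fin (n+1) × Fin 2)) := hv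
      rw [Sym2.mem_iff] at hv'
      rcases hv' with h | h
      · exact absurd h (by simp)
      · rw [Sum.inl.injEq, Prod.mk.injEq] at h
        exact absurd h.2 (by decide)
    · have hv' : Sum.inl (j, 1) ∈ s(Sum.inr (j'+1) , Sum.inl ((j',1) : Fin (n+1) × Fin 2)) := hv
      rw [Sym2.mem_iff] at hv'
      rcases hv' with h | h
      · exact absurd h (by simp)
      · rw [Sum.inl.injEq, Prod.mk.injEq] at h
        obtain ⟨rfl, h2⟩ := h
        exact Set.mem_insert_of_mem _ (Set.mem_insert_of_mem _ rfl)
  · intro hm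
    rcases hm with rfl | rfl | rfl
    · exact ⟨emap_mem hn (j,0), by rw [emap0]; simp⟩
    · exact ⟨emap_mem hn (j,2), by rw [emap2]; simp⟩
    · exact ⟨emap_mem hn (j,4), by rw [emap4]; simp⟩

lemma inc_z (hn : 1 ≤ n) (k j' : Fin (n+1)) (hj' : j' + 1 = k) :
    (TB n).incidenceSet (Sum.inr k) =
      {emap n (k, 1), emap n (k, 2), emap n (j', 3), emap n (j', 4)} := by
  ext e
  rw [mem_inc]
  constructor
  · rintro ⟨he, hv⟩
    rw [edgeSet_TB hn] at he
    simp only [Finset.coe_image, Finset.coe_univ, Set.image_univ, Set.mem_range] at he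
    obtain ⟨⟨j'', r'⟩, rfl⟩ := he
    fin_cases r'
    · have hv' : Sum.inr k ∈ s(Sum.inl ((j'',0) : Fin (n+1) × Fin 2), Sum.inl (j'',1)) := hv
      rw [Sym2.mem_iff] at hv'
      rcases hv' with h | h <;> exact absurd h (by simp)
    · have hv' : Sum.inr k ∈ s(Sum.inr j'' , Sum.inl ((j'',0) : Fin (n+1) × Fin 2)) := hv
      rw [Sym2.mem_iff] at hv'
      rcases hv' with h | h
      · rw [Sum.inr.injEq] at h; subst h
        exact Set.mem_insert _ _
      · exact absurd h (by simp)
    · have hv' : Sum.inr k ∈ s(Sum.inr j'' , Sum.inl ((j'',1) : Fin (n+1) × Fin 2)) := hv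
      rw [Sym2.mem_iff] at hv'
      rcases hv' with h | h
      · rw [Sum.inr.injEq] at h; subst h
        exact Set.mem_insert_of_mem _ (Set.mem_insert _ _)
      · exact absurd h (by simp)
    · have hv' : Sum.inr k ∈ s(Sum.inr (j''+1) , Sum.inl ((j'',0) : Fin (n+1) × Fin 2)) := hv
      rw [Sym2.mem_iff] at hv'
      rcases hv' with h | h
      · rw [Sum.inr.injEq] at h
        have : j'' = j' := by
          have := hj'.trans h
          exact add_right_cancel this.symm
        subst this
        exact Set.mem_insert_of_mem _ (Set.mem_insert_of_mem _ (Set.mem_insert _ _))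
      · exact absurd h (by simp)
    · have hv' : Sum.inr k ∈ s(Sum.inr (j''+1) , Sum.inl ((j'',1) : Fin (n+1) × Fin 2)) := hv
      rw [Sym2.mem_iff] at hv'
      rcases hv' with h | h
      · rw [Sum.inr.injEq] at h
        have : j'' = j' := by
          have := hj'.trans h
          exact add_right_cancel this.symm
        subst this
        exact Set.mem_insert_of_mem _ (Set.mem_insert_of_mem _
          (Set.mem_insert_of_mem _ rfl))
      · exact absurd h (by simp)
  · intro hm
    rcases hm with rfl | rfl | rfl | rfl
    · exact ⟨emap_mem hn (k,1), by rw [emap1]; simp⟩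
    · exact ⟨emap_mem hn (k,2), by rw [emap2]; simp⟩
    · exact ⟨emap_mem hn (j',3), by rw [emap3]; simp [hj']⟩
    · exact ⟨emap_mem hn (j',4), by rw [emap4]; simp [hj']⟩

lemma lab_bounds (he : n % 2 = 0) {j r : ℕ} (hj : j ≤ n) (hr : r ≤ 4) :
    1 ≤ lab n j r ∧ lab n j r ≤ 5 * (n + 1) := by
  unfold lab; split_ifs <;> omega

set_option maxHeartbeats 1000000 in
lemma lab_inj (he : n % 2 = 0) {j j' r r' : ℕ} (hj : j ≤ n) (hj' : j' ≤ n)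
    (hr : r ≤ 4) (hr' : r' ≤ 4) (h : lab n j r = lab n j' r') : j = j' ∧ r = r' := by
  interval_cases r <;> interval_cases r' <;>
    (simp only [lab] at h; norm_num at h; split_ifs at h <;> omega)

lemma lab_sum_u (he : n % 2 = 0) {j : ℕ} (hj : j ≤ n) :
    lab n j 0 + lab n j 1 + lab n j 3 = 9*(n/2)+6 := by
  simp only [lab]; norm_num; split_ifs <;> omega

lemma lab_sum_v (he : n % 2 = 0) {j : ℕ} (hj : j ≤ n) :
    lab n j 0 + lab n j 2 + lab n j 4 = 17*(n/2)+10 := by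
  simp only [lab]; norm_num; split_ifs <;> omega

lemma lab_sum_z (he : n % 2 = 0) {k k' : ℕ} (hk : k ≤ n) (hk' : k' ≤ n)
    (h : (k = 0 ∧ k' = n) ∨ k = k' + 1) :
    lab n k 1 + lab n k 2 + lab n k' 3 + lab n k' 4 = 24*(n/2)+14 := by
  simp only [lab]; norm_num; split_ifs <;> omega

lemma finsum_triple {α : Type*} [DecidableEq α] (f : α → ℕ) (a b c : α)
    (hab : a ≠ b) (hac : a ≠ c) (hbc : b ≠ c) :
    ∑ᶠ e ∈ ({a, b, c} : Set α), f e = f a + f b + f c := by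
  have h : ({a, b, c} : Set α) = ↑({a, b, c} : Finset α) := by simp
  rw [h, finsum_mem_coe_finset]
  rw [Finset.sum_insert (by simp [hab, hac]), Finset.sum_insert (by simp [hbc]),
    Finset.sum_singleton, Nat.add_assoc]

lemma finsum_quad {α : Type*} [DecidableEq α] (f : α → ℕ) (a b c d : α)
    (hab : a ≠ b) (hac : a ≠ c) (had : a ≠ d) (hbc : b ≠ c) (hbd : b ≠ d) (hcd : c ≠ d) :
    ∑ᶠ e ∈ ({a, b, c, d} : Set α), f e = f a + f b + f c + f d := by
  have h : ({a, b, c, d} : Set α) = ↑({a, b, c, d} : Finset α) := by simp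
  rw [h, finsum_mem_coe_finset]
  rw [Finset.sum_insert (by simp [hab, hac, had]), Finset.sum_insert (by simp [hbc, hbd]),
    Finset.sum_insert (by simp [hcd]), Finset.sum_singleton]
  ring

lemma fplus_u0 (hn : 1 ≤ n) (he : n % 2 = 0) (j : Fin (n+1)) :
    fplus (TB n) (fTB n) (Sum.inl (j, 0)) = 9*(n/2)+6 := by
  classical
  have hj1 : (j:ℕ) ≤ n := Nat.le_of_lt_succ j.isLt
  have h01 : emap n (j,0) ≠ emap n (j,1) := by
    rw [emap0, emap1]; simp [Sym2.eq_iff]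
  have h03 : emap n (j,0) ≠ emap n (j,3) := by
    rw [emap0, emap3]; simp [Sym2.eq_iff]
  have h13 : emap n (j,1) ≠ emap n (j,3) := by
    rw [emap1, emap3]; simp [Sym2.eq_iff, fin_ne_succ hn j]
  rw [fplus, inc_u0 hn j, finsum_triple _ _ _ _ h01 h03 h13,
    fTB_emap hn j 0, fTB_emap hn j 1, fTB_emap hn j 3]
  show lab n (j:ℕ) 0 + lab n (j:ℕ) 1 + lab n (j:ℕ) 3 = _
  exact lab_sum_u he hj1

lemma fplus_u1 (hn : 1 ≤ n) (he : n % 2 = 0) (j : Fin (n+1)) :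
    fplus (TB n) (fTB n) (Sum.inl (j, 1)) = 17*(n/2)+10 := by
  classical
  have hj1 : (j:ℕ) ≤ n := Nat.le_of_lt_succ j.isLt
  have h01 : emap n (j,0) ≠ emap n (j,2) := by
    rw [emap0, emap2]; simp [Sym2.eq_iff]
  have h03 : emap n (j,0) ≠ emap n (j,4) := by
    rw [emap0, emap4]; simp [Sym2.eq_iff]
  have h13 : emap n (j,2) ≠ emap n (j,4) := by
    rw [emap2, emap4]; simp [Sym2.eq_iff, fin_ne_succ hn j]
  rw [fplus, inc_u1 hn j, finsum_triple _ _ _ _ h01 h03 h13,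
    fTB_emap hn j 0, fTB_emap hn j 2, fTB_emap hn j 4]
  show lab n (j:ℕ) 0 + lab n (j:ℕ) 2 + lab n (j:ℕ) 4 = _
  exact lab_sum_v he hj1

def prevF (n : ℕ) (k : Fin (n+1)) : Fin (n+1) :=
  ⟨if (k:ℕ) = 0 then n else (k:ℕ)-1, by split_ifs <;> omega⟩

lemma prevF_add_one (k : Fin (n+1)) : prevF n k + 1 = k := by
  apply Fin.ext
  rw [val_add_one]
  have hk : (k:ℕ) ≤ n := Nat.le_of_lt_succ k.isLt
  have hpv : ((prevF n k : Fin (n+1)):ℕ) = if (k:ℕ) = 0 then n else (k:ℕ)-1 := rfl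
  rw [hpv]
  split_ifs with h0
  · rw [Nat.mod_self]; omega
  · rw [Nat.mod_eq_of_lt (by omega)]; omega

lemma fplus_z (hn : 1 ≤ n) (he : n % 2 = 0) (k : Fin (n+1)) :
    fplus (TB n) (fTB n) (Sum.inr k) = 24*(n/2)+14 := by
  classical
  set j' := prevF n k with hj'def
  have hj' : j' + 1 = k := prevF_add_one k
  have hkj2 : j' ≠ k := by
    intro h; exact (fin_ne_succ hn j') (by rw [hj', ← h])
  have h12 : emap n (k,1) ≠ emap n (k,2) := by
    rw [emap1, emap2]; simp [Sym2.eq_iff]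
  have h13 : emap n (k,1) ≠ emap n (j',3) := by
    rw [emap1, emap3, hj']; simp [Sym2.eq_iff, Prod.ext_iff]
    intro h; exact absurd h hkj2.symm
  have h14 : emap n (k,1) ≠ emap n (j',4) := by
    rw [emap1, emap4, hj']; simp [Sym2.eq_iff, Prod.ext_iff]
  have h23 : emap n (k,2) ≠ emap n (j',3) := by
    rw [emap2, emap3, hj']; simp [Sym2.eq_iff, Prod.ext_iff]
  have h24 : emap n (k,2) ≠ emap n (j',4) := by
    rw [emap2, emap4, hj']; simp [Sym2.eq_iff, Prod.ext_iff]
    intro h; exact absurd h hkj2.symm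
  have h34 : emap n (j',3) ≠ emap n (j',4) := by
    rw [emap3, emap4]; simp [Sym2.eq_iff, Prod.ext_iff]
  rw [fplus, inc_z hn k j' hj', finsum_quad _ _ _ _ _ h12 h13 h14 h23 h24 h34,
    fTB_emap hn k 1, fTB_emap hn k 2, fTB_emap hn j' 3, fTB_emap hn j' 4]
  show lab n (k:ℕ) 1 + lab n (k:ℕ) 2 + lab n (j':ℕ) 3 + lab n (j':ℕ) 4 = _
  have hk : (k:ℕ) ≤ n := Nat.le_of_lt_succ k.isLt
  have hjv : (j':ℕ) = if (k:ℕ) = 0 then n else (k:ℕ)-1 := rfl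
  apply lab_sum_z he hk
  · rw [hjv]; split_ifs <;> omega
  · rw [hjv]; split_ifs with h0
    · left; exact ⟨h0, rfl⟩
    · right; omega
lemma lab_inj' (he : n % 2 = 0) :
    Function.Injective (fun a : Fin (n+1) × Fin 5 => lab n (a.1:ℕ) (a.2:ℕ)) := by
  rintro ⟨j, r⟩ ⟨j', r'⟩ h
  obtain ⟨h1, h2⟩ := lab_inj he (Nat.le_of_lt_succ j.isLt) (Nat.le_of_lt_succ j'.isLt)
    (Nat.le_of_lt_succ r.isLt) (Nat.le_of_lt_succ r'.isLt) h
  exact Prod.ext (Fin.ext h1) (Fin.ext h2)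

lemma lab_img (he : n % 2 = 0) :
    Finset.image (fun a : Fin (n+1) × Fin 5 => lab n (a.1:ℕ) (a.2:ℕ)) Finset.univ
      = Finset.Icc 1 (5*(n+1)) := by
  apply Finset.eq_of_subset_of_card_le
  · intro x hx
    rw [Finset.mem_image] at hx
    obtain ⟨a, -, rfl⟩ := hx
    rw [Finset.mem_Icc]
    exact lab_bounds he (Nat.le_of_lt_succ a.1.isLt) (Nat.le_of_lt_succ a.2.isLt)
  · rw [Finset.card_image_of_injective _ (lab_inj' he), Nat.card_Icc, Finset.card_univ]
    simp [Fintype.card_prod]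
    ring_nf
    omega

lemma injOn_fTB (hn : 1 ≤ n) (he : n % 2 = 0) :
    Set.InjOn (fTB n) (TB n).edgeSet := by
  intro e1 he1 e2 he2 hEq
  rw [edgeSet_TB hn] at he1 he2
  simp only [Finset.coe_image, Finset.coe_univ, Set.image_univ, Set.mem_range] at he1 he2
  obtain ⟨⟨j1, r1⟩, rfl⟩ := he1
  obtain ⟨⟨j2, r2⟩, rfl⟩ := he2
  rw [fTB_emap hn j1 r1, fTB_emap hn j2 r2] at hEq
  have := lab_inj' he (a₁ := (j1, r1)) (a₂ := (j2, r2)) hEq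
  rw [this]

lemma fTB_img (hn : 1 ≤ n) (he : n % 2 = 0) :
    Finset.image (fTB n) (Finset.image (emap n) Finset.univ) = Finset.Icc 1 (5*(n+1)) := by
  rw [Finset.image_image]
  rw [show (fTB n) ∘ (emap n) = fun a : Fin (n+1) × Fin 5 => lab n (a.1:ℕ) (a.2:ℕ) from
    funext fun a => fTB_emap hn a.1 a.2]
  exact lab_img he

lemma ncard_edgeSet (hn : 1 ≤ n) (he : n % 2 = 0) :
    (TB n).edgeSet.ncard = 5*(n+1) := by
  rw [edgeSet_TB hn, Set.ncard_coe_finset]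
  have hinj : Set.InjOn (fTB n) ↑(Finset.image (emap n) Finset.univ) := by
    rw [← edgeSet_TB hn]; exact injOn_fTB hn he
  have := Finset.card_image_of_injOn hinj
  rw [fTB_img hn he, Nat.card_Icc] at this
  omega

lemma bijOn_fTB (hn : 1 ≤ n) (he : n % 2 = 0) :
    Set.BijOn (fTB n) (TB n).edgeSet (Set.Icc 1 (TB n).edgeSet.ncard) := by
  rw [ncard_edgeSet hn he]
  refine ⟨?_, injOn_fTB hn he, ?_⟩
  · intro e heE
    rw [edgeSet_TB hn] at heE
    simp only [Finset.coe_image, Finset.coe_univ, Set.image_univ, Set.mem_range] at heE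
    obtain ⟨⟨j, r⟩, rfl⟩ := heE
    rw [fTB_emap hn j r, Set.mem_Icc]
    exact lab_bounds he (Nat.le_of_lt_succ j.isLt) (Nat.le_of_lt_succ r.isLt)
  · intro x hx
    rw [← Finset.coe_Icc, ← fTB_img hn he, Finset.coe_image] at hx
    obtain ⟨e, heE, rfl⟩ := hx
    exact ⟨e, by rw [edgeSet_TB hn]; exact heE, rfl⟩

lemma fplus_inl (hn : 1 ≤ n) (he : n % 2 = 0) (j : Fin (n+1)) (i : Fin 2) :
    fplus (TB n) (fTB n) (Sum.inl (j, i)) =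
      if i = 0 then 9*(n/2)+6 else 17*(n/2)+10 := by
  by_cases hi : i = 0
  · rw [hi, if_pos rfl]; exact fplus_u0 hn he j
  · have h1 : i = 1 := by
      apply Fin.ext
      have := i.isLt
      have h0 : (i : ℕ) ≠ 0 := fun h => hi (Fin.ext h)
      omega
    rw [h1, if_neg (by decide)]
    exact fplus_u1 hn he j

lemma fplus_ne_adj (hn : 1 ≤ n) (he : n % 2 = 0) {u w : TBVert n}
    (hadj : (TB n).Adj u w) : fplus (TB n) (fTB n) u ≠ fplus (TB n) (fTB n) w := by
  rcases u with ⟨j, i⟩ | k <;> rcases w with ⟨j', i'⟩ | k'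
  · rw [TB_adj_ll] at hadj
    obtain ⟨-, (⟨h2, h3⟩ | ⟨h2, h3⟩)⟩ := hadj <;> simp only at h2 h3 <;>
      rw [fplus_inl hn he, fplus_inl hn he, h2, h3] <;> norm_num <;> omega
  · rw [fplus_inl hn he, fplus_z hn he]
    split_ifs <;> omega
  · rw [fplus_inl hn he, fplus_z hn he]
    split_ifs <;> omega
  · exact absurd hadj TB_adj_rr

lemma range_fplus (hn : 1 ≤ n) (he : n % 2 = 0) :
    Set.range (fplus (TB n) (fTB n)) = {9*(n/2)+6, 17*(n/2)+10, 24*(n/2)+14} := by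
  ext x
  constructor
  · rintro ⟨v, rfl⟩
    rcases v with ⟨j, i⟩ | k
    · rw [fplus_inl hn he]
      split_ifs
      · exact Set.mem_insert _ _
      · exact Set.mem_insert_of_mem _ (Set.mem_insert _ _)
    · rw [fplus_z hn he]
      exact Set.mem_insert_of_mem _ (Set.mem_insert_of_mem _ rfl)
  · rintro (rfl | rfl | rfl)
    · exact ⟨Sum.inl (0, 0), fplus_u0 hn he 0⟩
    · exact ⟨Sum.inl (0, 1), fplus_u1 hn he 0⟩
    · exact ⟨Sum.inr 0, fplus_z hn he 0⟩

lemma ncard_three {a b c : ℕ} (hab : a ≠ b) (hac : a ≠ c) (hbc : b ≠ c) :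
    ({a, b, c} : Set ℕ).ncard = 3 := by
  rw [Set.ncard_insert_of_notMem (by simp [hab, hac]),
    Set.ncard_insert_of_notMem (by simp [hbc]), Set.ncard_singleton]


/-- For every even `n ≥ 2`, `χ_{la}(TB(n)) = 3`. -/
theorem chiLA_TB (n : ℕ) (heven : Even n) (hn : 2 ≤ n) : chiLA (TB n) = 3 := by
  have he : n % 2 = 0 := Nat.even_iff.mp heven
  have hn1 : 1 ≤ n := by omega
  have hmem : 3 ∈ {c : ℕ | ∃ f : Sym2 (TBVert n) → ℕ,
      IsLocalAntimagic (TB n) f ∧ (Set.range (fplus (TB n) f)).ncard = c} := by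
    refine ⟨fTB n, ⟨bijOn_fTB hn1 he, fun u w hadj => fplus_ne_adj hn1 he hadj⟩, ?_⟩
    rw [range_fplus hn1 he]
    exact ncard_three (by omega) (by omega) (by omega)
  have hlb : ∀ c ∈ {c : ℕ | ∃ f : Sym2 (TBVert n) → ℕ,
      IsLocalAntimagic (TB n) f ∧ (Set.range (fplus (TB n) f)).ncard = c}, 3 ≤ c := by
    rintro c ⟨f, ⟨-, hdiff⟩, rfl⟩
    have hxy : (TB n).Adj (Sum.inl ((0 : Fin (n+1)), (0 : Fin 2))) (Sum.inl (0, 1)) :=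
      TB_adj_ll.mpr ⟨rfl, Or.inl ⟨rfl, rfl⟩⟩
    have hzx : (TB n).Adj (Sum.inr (0 : Fin (n+1))) (Sum.inl (0, 0)) :=
      TB_adj_rl.mpr (Or.inl rfl)
    have hzy : (TB n).Adj (Sum.inr (0 : Fin (n+1))) (Sum.inl (0, 1)) :=
      TB_adj_rl.mpr (Or.inl rfl)
    have d1 := hdiff hxy
    have d2 := (hdiff hzx).symm
    have d3 := (hdiff hzy).symm
    have hsub : ({fplus (TB n) f (Sum.inl (0,0)), fplus (TB n) f (Sum.inl (0,1)),
        fplus (TB n) f (Sum.inr 0)} : Set ℕ) ⊆ Set.range (fplus (TB n) f) := by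
      rintro x (rfl | rfl | rfl) <;> exact ⟨_, rfl⟩
    calc (3 : ℕ) = ({fplus (TB n) f (Sum.inl (0,0)), fplus (TB n) f (Sum.inl (0,1)),
          fplus (TB n) f (Sum.inr 0)} : Set ℕ).ncard := (ncard_three d1 d2 d3).symm
      _ ≤ (Set.range (fplus (TB n) f)).ncard :=
          Set.ncard_le_ncard hsub (Set.finite_range _)
  exact le_antisymm (Nat.sInf_le hmem) (le_csInf ⟨3, hmem⟩ hlb)

end LocalAntimagic
end

section
/- Let n = 2k ≥ 2 be even. Let V_3 be the set of the 2n+2 degree-2 vertices of the peanut graph Pt(n), and let P be a partition of V_3 into r ≥ 2 blocks of equal size s = (2n+2)/r with 2 ≤ s ≤ n+1, such that no two vertices in the same block are adjacent or have a common neighbor. Then the graph Pt^3(r, n) obtained from Pt(n) by merging each block of P into a single vertex satisfies χ_la(Pt^3(r, n)) = 3. -/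
namespace LocalAntimagic

variable {V W : Type*}

/-- The degree-3 vertices of `Pt(n)`: the vertices `u_{2j-1}, v_{2j-1}`,
i.e. `Sum.inl (i, c)` with `i` even (0-indexed). -/
def Ptdeg3 (n : ℕ) : Set (PtVert n) :=
  {v | ∃ (i : Fin (2 * n + 1)) (c : Fin 2), (i : ℕ) % 2 = 0 ∧ v = Sum.inl (i, c)}

/-- The degree-2 vertices of `Pt(n)`: `x, y` and the vertices `u_{2i}, v_{2i}`. -/
def Ptdeg2 (n : ℕ) : Set (PtVert n) :=
  {v | (∃ j, v = Sum.inr j) ∨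
       ∃ (i : Fin (2 * n + 1)) (c : Fin 2), (i : ℕ) % 2 = 1 ∧ v = Sum.inl (i, c)}

def Elab (k c i : ℕ) : ℕ :=
  if c = 0 then
    if i % 4 = 0 then 7*k+4 - i/4
    else if i % 4 = 1 then 4*k+2 - i/4
    else if i % 4 = 2 then 4*k+3 + i/4
    else k+2 + i/4
  else
    if i % 4 = 0 then k+1 - i/4
    else if i % 4 = 1 then 6*k+3 - i/4
    else if i % 4 = 2 then 2*k+2 + i/4
    else 7*k+5 + i/4

def Rlab (k i : ℕ) : ℕ := if i % 4 = 0 then 8*k+5 + i/2 else 10*k+5 - i/2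

def mkF (n x : ℕ) : Fin (2*n+1) := ⟨x % (2*n+1), Nat.mod_lt x (by omega)⟩

lemma mkF_val {n x : ℕ} (h : x < 2*n+1) : ((mkF n x : Fin (2*n+1)) : ℕ) = x :=
  Nat.mod_eq_of_lt h

def vX (n : ℕ) : PtVert n := Sum.inr 0
def vY (n : ℕ) : PtVert n := Sum.inr 1
def vC (n : ℕ) (c : Fin 2) (i : ℕ) : PtVert n := Sum.inl (mkF n i, c)

def cE (n : ℕ) (c : Fin 2) (i : ℕ) : Sym2 (PtVert n) :=
  if i = 0 then s(vX n, vC n c 0)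
  else if i = 2*n+1 then s(vC n c (2*n), vY n)
  else s(vC n c (i-1), vC n c i)

def rE (n : ℕ) (i : ℕ) : Sym2 (PtVert n) := s(vC n 0 i, vC n 1 i)

def hlab (k n : ℕ) : PtVert n → PtVert n → ℕ
  | Sum.inl p, Sum.inl q =>
      (if p.2 = q.2 ∧ (p.1:ℕ)+1 = (q.1:ℕ) then Elab k (p.2:ℕ) (q.1:ℕ) else 0) +
      (if p.1 = q.1 ∧ (p.1:ℕ) % 2 = 0 ∧ p.2 = 0 ∧ q.2 = 1 then Rlab k (p.1:ℕ) else 0)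
  | Sum.inr j, Sum.inl p =>
      (if j = 0 ∧ (p.1:ℕ) = 0 then Elab k (p.2:ℕ) 0 else 0) +
      (if j = 1 ∧ (p.1:ℕ) = 2*n then Elab k (p.2:ℕ) (2*n+1) else 0)
  | _, _ => 0

def glab (k n : ℕ) : Sym2 (PtVert n) → ℕ :=
  Sym2.lift ⟨fun a b => hlab k n a b + hlab k n b a, fun a b => by dsimp only; omega⟩

lemma glab_mk {k n : ℕ} (a b : PtVert n) :
    glab k n s(a, b) = hlab k n a b + hlab k n b a := rfl

lemma vC_ne_vC {n : ℕ} {c c' : Fin 2} {i i' : ℕ} (hi : i < 2*n+1) (hi' : i' < 2*n+1)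
    (h : i ≠ i' ∨ c ≠ c') : vC n c i ≠ vC n c' i' := by
  intro hEq
  rw [vC, vC, Sum.inl.injEq, Prod.mk.injEq] at hEq
  obtain ⟨h2, h3⟩ := hEq
  have h4 : ((mkF n i : Fin (2*n+1)) : ℕ) = ((mkF n i' : Fin (2*n+1)) : ℕ) := by rw [h2]
  rw [mkF_val hi, mkF_val hi'] at h4
  tauto

lemma vC_eq_iff {n : ℕ} {c c' : Fin 2} {i i' : ℕ} (hi : i < 2*n+1) (hi' : i' < 2*n+1) :
    vC n c i = vC n c' i' ↔ i = i' ∧ c = c' := by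
  constructor
  · intro h
    by_contra hc
    rw [not_and_or] at hc
    exact vC_ne_vC hi hi' (by tauto) h
  · rintro ⟨rfl, rfl⟩; rfl

lemma glab_cE {k n : ℕ} (c : Fin 2) {i : ℕ} (hi : i ≤ 2*n+1) :
    glab k n (cE n c i) = Elab k (c:ℕ) i := by
  rcases Nat.eq_or_lt_of_le hi with h21 | hlt
  · -- i = 2n+1 : y edge
    rw [cE, if_neg (by omega), if_pos h21, glab_mk]
    have h1 : hlab k n (vC n c (2*n)) (vY n) = 0 := rfl
    have h2 : hlab k n (vY n) (vC n c (2*n)) = Elab k (c:ℕ) (2*n+1) := by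
      show (if (1:Fin 2) = 0 ∧ ((mkF n (2*n) : Fin (2*n+1)):ℕ) = 0 then
          Elab k (c:ℕ) 0 else 0) +
        (if (1:Fin 2) = 1 ∧ ((mkF n (2*n) : Fin (2*n+1)):ℕ) = 2*n then
          Elab k (c:ℕ) (2*n+1) else 0) = Elab k (c:ℕ) (2*n+1)
      rw [mkF_val (by omega), if_neg (by simp), if_pos ⟨rfl, rfl⟩, Nat.zero_add]
    rw [h1, h2, h21, Nat.zero_add]
  · rcases Nat.eq_zero_or_pos i with rfl | hpos
    · -- x edge
      rw [cE, if_pos rfl, glab_mk]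
      have h1 : hlab k n (vX n) (vC n c 0) = Elab k (c:ℕ) 0 := by
        show (if (0:Fin 2) = 0 ∧ ((mkF n 0 : Fin (2*n+1)):ℕ) = 0 then
            Elab k (c:ℕ) 0 else 0) +
          (if (0:Fin 2) = 1 ∧ ((mkF n 0 : Fin (2*n+1)):ℕ) = 2*n then
            Elab k (c:ℕ) (2*n+1) else 0) = Elab k (c:ℕ) 0
        rw [mkF_val (by omega), if_pos ⟨rfl, rfl⟩, if_neg (by simp), Nat.add_zero]
      have h2 : hlab k n (vC n c 0) (vX n) = 0 := rfl
      rw [h1, h2, Nat.add_zero]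
    · -- interior chain edge
      rw [cE, if_neg (by omega), if_neg (by omega), glab_mk]
      have hv1 : ((mkF n (i-1) : Fin (2*n+1)):ℕ) = i - 1 := mkF_val (by omega)
      have hv2 : ((mkF n i : Fin (2*n+1)):ℕ) = i := mkF_val (by omega)
      have h1 : hlab k n (vC n c (i-1)) (vC n c i) = Elab k (c:ℕ) i := by
        show (if c = c ∧ ((mkF n (i-1) : Fin (2*n+1)):ℕ)+1 = ((mkF n i : Fin (2*n+1)):ℕ)
            then Elab k (c:ℕ) ((mkF n i : Fin (2*n+1)):ℕ) else 0) +
          (if mkF n (i-1) = mkF n i ∧ ((mkF n (i-1) : Fin (2*n+1)):ℕ) % 2 = 0 ∧ c = 0 ∧ c = 1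
            then Rlab k ((mkF n (i-1) : Fin (2*n+1)):ℕ) else 0) = Elab k (c:ℕ) i
        rw [if_pos ⟨rfl, by omega⟩,
          if_neg (by rintro ⟨-, -, h0, h1⟩; rw [h0] at h1; exact absurd h1 (by decide)), hv2,
          Nat.add_zero]
      have h2 : hlab k n (vC n c i) (vC n c (i-1)) = 0 := by
        show (if c = c ∧ ((mkF n i : Fin (2*n+1)):ℕ)+1 = ((mkF n (i-1) : Fin (2*n+1)):ℕ)
            then Elab k (c:ℕ) ((mkF n (i-1) : Fin (2*n+1)):ℕ) else 0) +
          (if mkF n i = mkF n (i-1) ∧ ((mkF n i : Fin (2*n+1)):ℕ) % 2 = 0 ∧ c = 0 ∧ c = 1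
            then Rlab k ((mkF n i : Fin (2*n+1)):ℕ) else 0) = 0
        rw [if_neg (by rintro ⟨-, h⟩; omega),
          if_neg (by rintro ⟨-, -, h0, h1⟩; rw [h0] at h1; exact absurd h1 (by decide))]
      rw [h1, h2, Nat.add_zero]

lemma glab_rE {k n : ℕ} {i : ℕ} (hi : i ≤ 2*n) (h2 : i % 2 = 0) :
    glab k n (rE n i) = Rlab k i := by
  rw [rE, glab_mk]
  have hv : ((mkF n i : Fin (2*n+1)):ℕ) = i := mkF_val (by omega)
  have h1 : hlab k n (vC n 0 i) (vC n 1 i) = Rlab k i := by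
    show (if (0:Fin 2) = (1:Fin 2) ∧ ((mkF n i : Fin (2*n+1)):ℕ)+1 = ((mkF n i : Fin (2*n+1)):ℕ)
        then Elab k ((0:Fin 2):ℕ) ((mkF n i : Fin (2*n+1)):ℕ) else 0) +
      (if mkF n i = mkF n i ∧ ((mkF n i : Fin (2*n+1)):ℕ) % 2 = 0 ∧ (0:Fin 2) = 0 ∧ (1:Fin 2) = 1
        then Rlab k ((mkF n i : Fin (2*n+1)):ℕ) else 0) = Rlab k i
    rw [if_neg (by rintro ⟨h, -⟩; exact absurd h (by decide)),
      if_pos ⟨rfl, by omega, rfl, rfl⟩, hv, Nat.zero_add]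
  have h3 : hlab k n (vC n 1 i) (vC n 0 i) = 0 := by
    show (if (1:Fin 2) = (0:Fin 2) ∧ ((mkF n i : Fin (2*n+1)):ℕ)+1 = ((mkF n i : Fin (2*n+1)):ℕ)
        then Elab k ((1:Fin 2):ℕ) ((mkF n i : Fin (2*n+1)):ℕ) else 0) +
      (if mkF n i = mkF n i ∧ ((mkF n i : Fin (2*n+1)):ℕ) % 2 = 0 ∧ (1:Fin 2) = 0 ∧ (0:Fin 2) = 1
        then Rlab k ((mkF n i : Fin (2*n+1)):ℕ) else 0) = 0
    rw [if_neg (by rintro ⟨h, -⟩; exact absurd h (by decide)),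
      if_neg (by rintro ⟨-, -, h, -⟩; exact absurd h (by decide))]
  rw [h1, h3, Nat.add_zero]


def PtRel (n : ℕ) : PtVert n → PtVert n → Prop := fun a b =>
  match a, b with
  | Sum.inl p, Sum.inl q =>
      (p.2 = q.2 ∧ (p.1 : ℕ) + 1 = (q.1 : ℕ)) ∨
      (p.1 = q.1 ∧ (p.1 : ℕ) % 2 = 0 ∧ p.2 = 0 ∧ q.2 = 1)
  | Sum.inr j, Sum.inl p => (j = 0 ∧ (p.1 : ℕ) = 0) ∨ (j = 1 ∧ (p.1 : ℕ) = 2*n)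
  | _, _ => False

lemma Pt_adj {n : ℕ} {a b : PtVert n} :
    (Pt n).Adj a b ↔ a ≠ b ∧ (PtRel n a b ∨ PtRel n b a) :=
  SimpleGraph.fromRel_adj _ a b

lemma cE_mem_edgeSet {n : ℕ} (c : Fin 2) {i : ℕ} (hi : i ≤ 2*n+1) :
    cE n c i ∈ (Pt n).edgeSet := by
  rcases Nat.eq_or_lt_of_le hi with h21 | hlt
  · rw [cE, if_neg (by omega), if_pos h21, SimpleGraph.mem_edgeSet, Pt_adj]
    refine ⟨by simp [vC, vY], Or.inr (Or.inr ⟨rfl, mkF_val (by omega)⟩)⟩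
  · rcases Nat.eq_zero_or_pos i with rfl | hpos
    · rw [cE, if_pos rfl, SimpleGraph.mem_edgeSet, Pt_adj]
      refine ⟨by simp [vC, vX], Or.inl (Or.inl ⟨rfl, mkF_val (by omega)⟩)⟩
    · rw [cE, if_neg (by omega), if_neg (by omega), SimpleGraph.mem_edgeSet, Pt_adj]
      refine ⟨vC_ne_vC (by omega) (by omega) (Or.inl (by omega)), Or.inl (Or.inl ⟨rfl, ?_⟩)⟩
      show ((mkF n (i-1) : Fin (2*n+1)) : ℕ) + 1 = ((mkF n i : Fin (2*n+1)) : ℕ)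
      rw [mkF_val (by omega), mkF_val (by omega)]; omega

lemma rE_mem_edgeSet {n : ℕ} {i : ℕ} (hi : i ≤ 2*n) (h2 : i % 2 = 0) :
    rE n i ∈ (Pt n).edgeSet := by
  rw [rE, SimpleGraph.mem_edgeSet, Pt_adj]
  refine ⟨vC_ne_vC (by omega) (by omega) (Or.inr (by decide)),
    Or.inl (Or.inr ⟨rfl, ?_, rfl, rfl⟩)⟩
  show ((mkF n i : Fin (2*n+1)) : ℕ) % 2 = 0
  rw [mkF_val (by omega)]; exact h2

lemma edge_form_aux {n : ℕ} (a b : PtVert n) (hrel : PtRel n a b) :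
    (∃ c : Fin 2, ∃ i ≤ 2*n+1, s(a, b) = cE n c i) ∨
    (∃ i ≤ 2*n, i % 2 = 0 ∧ s(a, b) = rE n i) := by
  rcases a with p | ja
  · rcases b with q | jb
    · rcases hrel with ⟨hc, hsucc⟩ | ⟨hi, hpar, hc0, hc1⟩
      · -- chain edge
        have hqlt : (q.1 : ℕ) < 2*n+1 := q.1.isLt
        refine Or.inl ⟨p.2, (q.1 : ℕ), by omega, ?_⟩
        have h1 : vC n p.2 ((q.1 : ℕ) - 1) = Sum.inl p := by
          rw [vC]; congr 1
          refine Prod.ext (Fin.ext ?_) rfl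
          rw [mkF_val (by omega)]; omega
        have h2 : vC n p.2 ((q.1 : ℕ)) = Sum.inl q := by
          rw [vC]; congr 1
          exact Prod.ext (Fin.ext (mkF_val (by omega))) hc
        rw [cE, if_neg (by omega), if_neg (by omega), h1, h2]
      · -- rung edge
        have hplt : (p.1 : ℕ) < 2*n+1 := p.1.isLt
        refine Or.inr ⟨(p.1 : ℕ), by omega, hpar, ?_⟩
        have h1 : vC n 0 ((p.1 : ℕ)) = Sum.inl p := by
          rw [vC]; congr 1
          exact Prod.ext (Fin.ext (mkF_val (by omega))) hc0.symm
        have h2 : vC n 1 ((p.1 : ℕ)) = Sum.inl q := by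
          rw [vC]; congr 1
          refine Prod.ext (Fin.ext ?_) hc1.symm
          rw [mkF_val (by omega), hi]
        rw [rE, h1, h2]
    · exact absurd hrel (by simp [PtRel])
  · rcases b with q | jb
    · rcases hrel with ⟨hj, hi0⟩ | ⟨hj, hi2n⟩
      · refine Or.inl ⟨q.2, 0, by omega, ?_⟩
        have h2 : vC n q.2 0 = Sum.inl q := by
          rw [vC]; congr 1
          exact Prod.ext (Fin.ext (by rw [mkF_val (by omega), hi0])) rfl
        rw [cE, if_pos rfl, h2, vX, ← hj]
      · refine Or.inl ⟨q.2, 2*n+1, by omega, ?_⟩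
        have h2 : vC n q.2 (2*n) = Sum.inl q := by
          rw [vC]; congr 1
          exact Prod.ext (Fin.ext (by rw [mkF_val (by omega), hi2n])) rfl
        rw [cE, if_neg (by omega), if_pos rfl, h2, vY, ← hj, Sym2.eq_swap]
    · exact absurd hrel (by simp [PtRel])

lemma mem_edgeSet_iff {n : ℕ} (e : Sym2 (PtVert n)) :
    e ∈ (Pt n).edgeSet ↔
      (∃ c : Fin 2, ∃ i ≤ 2*n+1, e = cE n c i) ∨
      (∃ i ≤ 2*n, i % 2 = 0 ∧ e = rE n i) := by
  constructor
  · intro he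
    induction e with
    | _ a b =>
      rw [SimpleGraph.mem_edgeSet, Pt_adj] at he
      rcases he.2 with hrel | hrel
      · exact edge_form_aux a b hrel
      · rw [Sym2.eq_swap]
        exact edge_form_aux b a hrel
  · rintro (⟨c, i, hi, rfl⟩ | ⟨i, hi, h2, rfl⟩)
    · exact cE_mem_edgeSet c hi
    · exact rE_mem_edgeSet hi h2


lemma vX_mem_cE_iff {n : ℕ} {c : Fin 2} {i : ℕ} (hi : i ≤ 2*n+1) :
    vX n ∈ cE n c i ↔ i = 0 := by
  rw [cE]
  rcases Nat.eq_zero_or_pos i with rfl | hpos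
  · rw [if_pos rfl, Sym2.mem_iff]; simp
  · rcases Nat.eq_or_lt_of_le hi with h21 | hlt
    · rw [if_neg (by omega), if_pos h21, Sym2.mem_iff]
      simp only [vX, vY, vC]
      constructor
      · rintro (h | h) <;> simp_all
      · omega
    · rw [if_neg (by omega), if_neg (by omega), Sym2.mem_iff]
      simp only [vX, vC]
      constructor
      · rintro (h | h) <;> simp_all
      · omega

lemma vY_mem_cE_iff {n : ℕ} {c : Fin 2} {i : ℕ} (hi : i ≤ 2*n+1) :
    vY n ∈ cE n c i ↔ i = 2*n+1 := by
  rw [cE]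
  rcases Nat.eq_zero_or_pos i with rfl | hpos
  · rw [if_pos rfl, Sym2.mem_iff]
    simp only [vX, vY, vC]
    constructor
    · rintro (h | h) <;> simp_all
    · omega
  · rcases Nat.eq_or_lt_of_le hi with h21 | hlt
    · rw [if_neg (by omega), if_pos h21, Sym2.mem_iff]
      simp only [vY, vC]
      constructor
      · intro _; omega
      · intro _; exact Or.inr trivial
    · rw [if_neg (by omega), if_neg (by omega), Sym2.mem_iff]
      simp only [vY, vC]
      constructor
      · rintro (h | h) <;> simp_all
      · omega

lemma vC_mem_cE_iff {n : ℕ} {c c' : Fin 2} {j i : ℕ} (hj : j ≤ 2*n) (hi : i ≤ 2*n+1) :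
    vC n c' j ∈ cE n c i ↔ c = c' ∧ (i = j ∨ i = j + 1) := by
  rw [cE]
  rcases Nat.eq_zero_or_pos i with rfl | hpos
  · rw [if_pos rfl, Sym2.mem_iff, vC_eq_iff (by omega) (by omega)]
    constructor
    · rintro (h | ⟨h1, h2⟩)
      · exact absurd h (by simp [vX, vC])
      · exact ⟨h2.symm, by omega⟩
    · rintro ⟨rfl, h⟩
      exact Or.inr ⟨by omega, rfl⟩
  · rcases Nat.eq_or_lt_of_le hi with h21 | hlt
    · rw [if_neg (by omega), if_pos h21, Sym2.mem_iff, vC_eq_iff (by omega) (by omega)]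
      constructor
      · rintro (⟨h1, h2⟩ | h)
        · exact ⟨h2.symm, by omega⟩
        · exact absurd h (by simp [vY, vC])
      · rintro ⟨rfl, h⟩
        exact Or.inl ⟨by omega, rfl⟩
    · rw [if_neg (by omega), if_neg (by omega), Sym2.mem_iff,
        vC_eq_iff (by omega) (by omega), vC_eq_iff (by omega) (by omega)]
      constructor
      · rintro (⟨h1, h2⟩ | ⟨h1, h2⟩)
        · exact ⟨h2.symm, by omega⟩
        · exact ⟨h2.symm, by omega⟩
      · rintro ⟨rfl, h⟩
        rcases h with h | h
        · exact Or.inr ⟨by omega, rfl⟩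
        · exact Or.inl ⟨by omega, rfl⟩

lemma vC_mem_rE_iff {n : ℕ} {c' : Fin 2} {j i : ℕ} (hj : j ≤ 2*n) (hi : i ≤ 2*n) :
    vC n c' j ∈ rE n i ↔ i = j := by
  rw [rE, Sym2.mem_iff, vC_eq_iff (by omega) (by omega), vC_eq_iff (by omega) (by omega)]
  constructor
  · rintro (⟨rfl, rfl⟩ | ⟨rfl, rfl⟩) <;> rfl
  · rintro rfl
    fin_cases c'
    · exact Or.inl ⟨rfl, rfl⟩
    · exact Or.inr ⟨rfl, rfl⟩

lemma vX_not_mem_rE {n : ℕ} {i : ℕ} : vX n ∉ rE n i := by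
  rw [rE, Sym2.mem_iff]; simp [vX, vC]

lemma vY_not_mem_rE {n : ℕ} {i : ℕ} : vY n ∉ rE n i := by
  rw [rE, Sym2.mem_iff]; simp [vY, vC]

lemma Elab_bounds {k c i : ℕ} (hc : c ≤ 1) (hi : i ≤ 4*k+1) :
    1 ≤ Elab k c i ∧ Elab k c i ≤ 8*k+4 := by
  unfold Elab; split_ifs <;> first | exact ‹False›.elim | omega

lemma Rlab_bounds {k i : ℕ} (hi : i ≤ 4*k) (h2 : i % 2 = 0) :
    8*k+5 ≤ Rlab k i ∧ Rlab k i ≤ 10*k+5 := by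
  unfold Rlab; split_ifs <;> first | exact ‹False›.elim | omega

lemma Elab_inj {k c c' i i' : ℕ} (hc : c ≤ 1) (hc' : c' ≤ 1)
    (hi : i ≤ 4*k+1) (hi' : i' ≤ 4*k+1) (h : Elab k c i = Elab k c' i') :
    c = c' ∧ i = i' := by
  unfold Elab at h; split_ifs at h <;> omega

lemma Rlab_inj {k i i' : ℕ} (hi : i ≤ 4*k) (h2 : i % 2 = 0)
    (hi' : i' ≤ 4*k) (h2' : i' % 2 = 0) (h : Rlab k i = Rlab k i') : i = i' := by
  unfold Rlab at h; split_ifs at h <;> omega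

lemma pair_sum_chain {k c i : ℕ} (hc : c ≤ 1) (h2 : i % 2 = 1) (hi : i ≤ 4*k) :
    Elab k c i + Elab k c (i+1) = 8*k+5 := by
  unfold Elab; split_ifs <;> first | exact ‹False›.elim | omega

lemma pair_sum_x {k : ℕ} : Elab k 0 0 + Elab k 1 0 = 8*k+5 := by
  unfold Elab; split_ifs <;> first | exact ‹False›.elim | omega

lemma pair_sum_y {k : ℕ} : Elab k 0 (4*k+1) + Elab k 1 (4*k+1) = 8*k+5 := by
  unfold Elab; split_ifs <;> first | exact ‹False›.elim | omega

lemma deg3_sum {k c i : ℕ} (hc : c ≤ 1) (h2 : i % 2 = 0) (hi : i ≤ 4*k) :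
    Elab k c i + Elab k c (i+1) + Rlab k i
      = if (i % 4 = 0 ↔ c = 0) then 19*k+11 else 15*k+9 := by
  unfold Elab Rlab; split_ifs <;> first | exact ‹False›.elim | omega

lemma label_surj {k l : ℕ} (h1 : 1 ≤ l) (h2 : l ≤ 10*k+5) :
    (∃ c ≤ 1, ∃ i ≤ 4*k+1, Elab k c i = l) ∨
    (∃ i ≤ 4*k, i % 2 = 0 ∧ Rlab k i = l) := by
  by_cases hA : l ≤ k+1
  · exact Or.inl ⟨1, by omega, 4*(k+1-l), by omega, by unfold Elab; split_ifs <;> first | exact ‹False›.elim | omega⟩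
  by_cases hB : l ≤ 2*k+1
  · exact Or.inl ⟨0, by omega, 4*(l-(k+2))+3, by omega, by unfold Elab; split_ifs <;> first | exact ‹False›.elim | omega⟩
  by_cases hC : l ≤ 3*k+1
  · exact Or.inl ⟨1, by omega, 4*(l-(2*k+2))+2, by omega, by unfold Elab; split_ifs <;> first | exact ‹False›.elim | omega⟩
  by_cases hD : l ≤ 4*k+2
  · exact Or.inl ⟨0, by omega, 4*(4*k+2-l)+1, by omega, by unfold Elab; split_ifs <;> first | exact ‹False›.elim | omega⟩
  by_cases hE : l ≤ 5*k+2
  · exact Or.inl ⟨0, by omega, 4*(l-(4*k+3))+2, by omega, by unfold Elab; split_ifs <;> first | exact ‹False›.elim | omega⟩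
  by_cases hF : l ≤ 6*k+3
  · exact Or.inl ⟨1, by omega, 4*(6*k+3-l)+1, by omega, by unfold Elab; split_ifs <;> first | exact ‹False›.elim | omega⟩
  by_cases hG : l ≤ 7*k+4
  · exact Or.inl ⟨0, by omega, 4*(7*k+4-l), by omega, by unfold Elab; split_ifs <;> first | exact ‹False›.elim | omega⟩
  by_cases hH : l ≤ 8*k+4
  · exact Or.inl ⟨1, by omega, 4*(l-(7*k+5))+3, by omega, by unfold Elab; split_ifs <;> first | exact ‹False›.elim | omega⟩
  by_cases hI : (l - (8*k+5)) % 2 = 0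
  · exact Or.inr ⟨2*(l-(8*k+5)), by omega, by omega, by unfold Rlab; split_ifs <;> first | exact ‹False›.elim | omega⟩
  · exact Or.inr ⟨2*(10*k+5-l), by omega, by omega, by unfold Rlab; split_ifs <;> first | exact ‹False›.elim | omega⟩


lemma cE_ne_cE {k n : ℕ} (hn : n = 2*k) {c c' : Fin 2} {i i' : ℕ}
    (hi : i ≤ 2*n+1) (hi' : i' ≤ 2*n+1) (h : i ≠ i' ∨ c ≠ c') :
    cE n c i ≠ cE n c' i' := by
  intro hEq
  have h1 := glab_cE (k := k) c hi
  have h2 := glab_cE (k := k) c' hi'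
  rw [hEq, h2] at h1
  have := Elab_inj (k := k) (c := (c' : ℕ)) (c' := (c : ℕ)) (by omega) (by omega)
    (by omega) (by omega) h1
  rcases h with h | h
  · exact h (by omega)
  · exact h (Fin.ext (by omega)).symm

lemma cE_ne_rE {k n : ℕ} (hn : n = 2*k) {c : Fin 2} {i i' : ℕ}
    (hi : i ≤ 2*n+1) (hi' : i' ≤ 2*n) (h2 : i' % 2 = 0) :
    cE n c i ≠ rE n i' := by
  intro hEq
  have h1 := glab_cE (k := k) c hi
  have hb := Elab_bounds (k := k) (c := (c : ℕ)) (i := i) (by omega) (by omega)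
  have h3 := glab_rE (k := k) hi' h2
  have hb' := Rlab_bounds (k := k) (i := i') (by omega) h2
  rw [hEq, h3] at h1
  omega

lemma rE_ne_rE {k n : ℕ} (hn : n = 2*k) {i i' : ℕ}
    (hi : i ≤ 2*n) (h2 : i % 2 = 0) (hi' : i' ≤ 2*n) (h2' : i' % 2 = 0) (h : i ≠ i') :
    rE n i ≠ rE n i' := by
  intro hEq
  have h1 := glab_rE (k := k) hi h2
  have h3 := glab_rE (k := k) hi' h2'
  rw [hEq, h3] at h1
  exact h (Rlab_inj (k := k) (by omega) h2 (by omega) h2' h1.symm)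

lemma incidence_vX {n : ℕ} :
    (Pt n).incidenceSet (vX n) = {cE n 0 0, cE n 1 0} := by
  ext e
  constructor
  · rintro ⟨he, hv⟩
    rcases (mem_edgeSet_iff e).mp he with ⟨c, i, hi, rfl⟩ | ⟨i, hi, h2, rfl⟩
    · have h0 : i = 0 := (vX_mem_cE_iff hi).mp hv
      subst h0
      fin_cases c
      · exact Or.inl rfl
      · exact Or.inr rfl
    · exact absurd hv vX_not_mem_rE
  · rintro (rfl | rfl) <;>
      exact ⟨cE_mem_edgeSet _ (by omega), (vX_mem_cE_iff (by omega)).mpr rfl⟩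

lemma incidence_vY {n : ℕ} :
    (Pt n).incidenceSet (vY n) = {cE n 0 (2*n+1), cE n 1 (2*n+1)} := by
  ext e
  constructor
  · rintro ⟨he, hv⟩
    rcases (mem_edgeSet_iff e).mp he with ⟨c, i, hi, rfl⟩ | ⟨i, hi, h2, rfl⟩
    · have h0 : i = 2*n+1 := (vY_mem_cE_iff hi).mp hv
      subst h0
      fin_cases c
      · exact Or.inl rfl
      · exact Or.inr rfl
    · exact absurd hv vY_not_mem_rE
  · rintro (rfl | rfl) <;>
      exact ⟨cE_mem_edgeSet _ (by omega), (vY_mem_cE_iff (by omega)).mpr rfl⟩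

lemma incidence_vC_odd {n : ℕ} {c : Fin 2} {i : ℕ} (hi : i ≤ 2*n) (h2 : i % 2 = 1) :
    (Pt n).incidenceSet (vC n c i) = {cE n c i, cE n c (i+1)} := by
  ext e
  constructor
  · rintro ⟨he, hv⟩
    rcases (mem_edgeSet_iff e).mp he with ⟨c', i', hi', rfl⟩ | ⟨i', hi', h2', rfl⟩
    · obtain ⟨rfl, h⟩ := (vC_mem_cE_iff hi hi').mp hv
      rcases h with rfl | rfl
      · exact Or.inl rfl
      · exact Or.inr rfl
    · have := (vC_mem_rE_iff hi hi').mp hv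
      omega
  · rintro (rfl | rfl)
    · exact ⟨cE_mem_edgeSet _ (by omega), (vC_mem_cE_iff hi (by omega)).mpr ⟨rfl, Or.inl rfl⟩⟩
    · exact ⟨cE_mem_edgeSet _ (by omega), (vC_mem_cE_iff hi (by omega)).mpr ⟨rfl, Or.inr rfl⟩⟩

lemma incidence_vC_even {n : ℕ} {c : Fin 2} {i : ℕ} (hi : i ≤ 2*n) (h2 : i % 2 = 0) :
    (Pt n).incidenceSet (vC n c i) = {cE n c i, cE n c (i+1), rE n i} := by
  ext e
  constructor
  · rintro ⟨he, hv⟩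
    rcases (mem_edgeSet_iff e).mp he with ⟨c', i', hi', rfl⟩ | ⟨i', hi', h2', rfl⟩
    · obtain ⟨rfl, h⟩ := (vC_mem_cE_iff hi hi').mp hv
      rcases h with rfl | rfl
      · exact Or.inl rfl
      · exact Or.inr (Or.inl rfl)
    · obtain rfl := (vC_mem_rE_iff hi hi').mp hv
      exact Or.inr (Or.inr rfl)
  · rintro (rfl | rfl | rfl)
    · exact ⟨cE_mem_edgeSet _ (by omega), (vC_mem_cE_iff hi (by omega)).mpr ⟨rfl, Or.inl rfl⟩⟩
    · exact ⟨cE_mem_edgeSet _ (by omega), (vC_mem_cE_iff hi (by omega)).mpr ⟨rfl, Or.inr rfl⟩⟩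
    · exact ⟨rE_mem_edgeSet hi h2, (vC_mem_rE_iff hi hi).mpr rfl⟩


lemma fplus_vX {k n : ℕ} (hn : n = 2*k) : fplus (Pt n) (glab k n) (vX n) = 8*k+5 := by
  rw [fplus, incidence_vX, finsum_mem_pair (cE_ne_cE hn (by omega) (by omega) (Or.inr (by decide))),
    glab_cE (k := k) _ (by omega), glab_cE (k := k) _ (by omega)]
  exact pair_sum_x

lemma fplus_vY {k n : ℕ} (hn : n = 2*k) : fplus (Pt n) (glab k n) (vY n) = 8*k+5 := by
  rw [fplus, incidence_vY, finsum_mem_pair (cE_ne_cE hn (by omega) (by omega) (Or.inr (by decide))),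
    glab_cE (k := k) _ (by omega), glab_cE (k := k) _ (by omega)]
  have h : 2*n+1 = 4*k+1 := by omega
  rw [h]
  exact pair_sum_y

lemma fplus_vC_odd {k n : ℕ} (hn : n = 2*k) {c : Fin 2} {i : ℕ} (hi : i ≤ 2*n) (h2 : i % 2 = 1) :
    fplus (Pt n) (glab k n) (vC n c i) = 8*k+5 := by
  rw [fplus, incidence_vC_odd hi h2,
    finsum_mem_pair (cE_ne_cE hn (by omega) (by omega) (Or.inl (by omega))),
    glab_cE (k := k) _ (by omega), glab_cE (k := k) _ (by omega)]
  exact pair_sum_chain (by omega) h2 (by omega)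

lemma fplus_vC_even {k n : ℕ} (hn : n = 2*k) {c : Fin 2} {i : ℕ} (hi : i ≤ 2*n) (h2 : i % 2 = 0) :
    fplus (Pt n) (glab k n) (vC n c i)
      = if (i % 4 = 0 ↔ (c : ℕ) = 0) then 19*k+11 else 15*k+9 := by
  rw [fplus, incidence_vC_even hi h2]
  have hs : ({cE n c i, cE n c (i+1), rE n i} : Set (Sym2 (PtVert n)))
      = insert (cE n c i) {cE n c (i+1), rE n i} := rfl
  have hnotmem : cE n c i ∉ ({cE n c (i+1), rE n i} : Set (Sym2 (PtVert n))) := by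
    rintro (h | h)
    · exact cE_ne_cE hn (by omega) (by omega) (Or.inl (by omega)) h
    · exact cE_ne_rE hn (by omega) (by omega) h2 h
  rw [hs, finsum_mem_insert _ hnotmem (Set.toFinite _),
    finsum_mem_pair (cE_ne_rE hn (by omega) (by omega) h2),
    glab_cE (k := k) _ (by omega), glab_cE (k := k) _ (by omega), glab_rE (k := k) (by omega) h2,
    ← Nat.add_assoc]
  exact deg3_sum (by omega) h2 (by omega)

lemma glab_bijOn {k n : ℕ} (hn : n = 2*k) :
    Set.BijOn (glab k n) (Pt n).edgeSet (Set.Icc 1 (10*k+5)) := by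
  refine ⟨?_, ?_, ?_⟩
  · intro e he
    rcases (mem_edgeSet_iff e).mp he with ⟨c, i, hi, rfl⟩ | ⟨i, hi, h2, rfl⟩
    · rw [glab_cE (k := k) _ hi]
      have := Elab_bounds (k := k) (c := (c:ℕ)) (i := i) (by omega) (by omega)
      exact ⟨by omega, by omega⟩
    · rw [glab_rE (k := k) hi h2]
      have := Rlab_bounds (k := k) (i := i) (by omega) h2
      exact ⟨by omega, by omega⟩
  · intro e he e' he' hEq
    rcases (mem_edgeSet_iff e).mp he with ⟨c, i, hi, rfl⟩ | ⟨i, hi, h2, rfl⟩ <;>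
      rcases (mem_edgeSet_iff e').mp he' with ⟨c', i', hi', rfl⟩ | ⟨i', hi', h2', rfl⟩
    · rw [glab_cE (k := k) _ hi, glab_cE (k := k) _ hi'] at hEq
      obtain ⟨hc, hi0⟩ := Elab_inj (k := k) (by omega) (by omega) (by omega) (by omega) hEq
      rw [hi0, Fin.ext (by omega : (c : ℕ) = (c' : ℕ))]
    · exfalso
      rw [glab_cE (k := k) _ hi, glab_rE (k := k) hi' h2'] at hEq
      have h1 := Elab_bounds (k := k) (c := (c:ℕ)) (i := i) (by omega) (by omega)
      have h2 := Rlab_bounds (k := k) (i := i') (by omega) h2'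
      omega
    · exfalso
      rw [glab_rE (k := k) hi h2, glab_cE (k := k) _ hi'] at hEq
      have h1 := Elab_bounds (k := k) (c := (c':ℕ)) (i := i') (by omega) (by omega)
      have h3 := Rlab_bounds (k := k) (i := i) (by omega) h2
      omega
    · rw [glab_rE (k := k) hi h2, glab_rE (k := k) hi' h2'] at hEq
      rw [Rlab_inj (k := k) (by omega) h2 (by omega) h2' hEq]
  · rintro l ⟨hl1, hl2⟩
    rcases label_surj (k := k) hl1 hl2 with ⟨c, hc, i, hi, hE⟩ | ⟨i, hi, h2, hR⟩
    · refine ⟨cE n ⟨c, by omega⟩ i, cE_mem_edgeSet _ (by omega), ?_⟩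
      rw [glab_cE (k := k) _ (by omega)]
      exact hE
    · refine ⟨rE n i, rE_mem_edgeSet (by omega) h2, ?_⟩
      rw [glab_rE (k := k) (by omega) h2]
      exact hR

lemma Pt_edgeSet_ncard {k n : ℕ} (hn : n = 2*k) : (Pt n).edgeSet.ncard = 10*k+5 := by
  rw [← Set.ncard_image_of_injOn (glab_bijOn hn).injOn, (glab_bijOn hn).image_eq,
    ← Finset.coe_Icc, Set.ncard_coe_finset, Nat.card_Icc]
  omega


lemma inr_mem_deg2 {n : ℕ} (j : Fin 2) : (Sum.inr j : PtVert n) ∈ Ptdeg2 n :=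
  Or.inl ⟨j, rfl⟩

lemma inl_mem_deg2_iff {n : ℕ} (pr : Fin (2*n+1) × Fin 2) :
    (Sum.inl pr : PtVert n) ∈ Ptdeg2 n ↔ (pr.1 : ℕ) % 2 = 1 := by
  constructor
  · rintro (⟨j, h⟩ | ⟨i, c, hpar, h⟩)
    · exact absurd h (by simp)
    · rw [Sum.inl.injEq] at h
      rw [h]
      exact hpar
  · intro h
    exact Or.inr ⟨pr.1, pr.2, h, by rw [← Prod.mk.eta (p := pr)]⟩

lemma vC_mem_deg2_iff {n : ℕ} {c : Fin 2} {i : ℕ} (hi : i ≤ 2*n) :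
    vC n c i ∈ Ptdeg2 n ↔ i % 2 = 1 := by
  rw [vC, inl_mem_deg2_iff]
  show ((mkF n i : Fin (2*n+1)) : ℕ) % 2 = 1 ↔ _
  rw [mkF_val (by omega)]

lemma vert_cases {n : ℕ} (v : PtVert n) :
    (∃ c : Fin 2, ∃ i ≤ 2*n, i % 2 = 0 ∧ v = vC n c i) ∨ v ∈ Ptdeg2 n := by
  rcases v with pr | j
  · by_cases h : (pr.1 : ℕ) % 2 = 1
    · exact Or.inr ((inl_mem_deg2_iff pr).mpr h)
    · refine Or.inl ⟨pr.2, (pr.1 : ℕ), by have := pr.1.isLt; omega, by omega, ?_⟩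
      rw [vC]
      rw [Sum.inl.injEq]
      refine Prod.ext (Fin.ext ?_) rfl
      rw [mkF_val pr.1.isLt]
  · exact Or.inr (inr_mem_deg2 j)

lemma deg2_forms {n : ℕ} {v : PtVert n} (hv : v ∈ Ptdeg2 n) :
    v = vX n ∨ v = vY n ∨ ∃ c : Fin 2, ∃ i ≤ 2*n, i % 2 = 1 ∧ v = vC n c i := by
  rcases v with pr | j
  · refine Or.inr (Or.inr ⟨pr.2, (pr.1 : ℕ), by have := pr.1.isLt; omega,
      (inl_mem_deg2_iff pr).mp hv, ?_⟩)
    rw [vC, Sum.inl.injEq]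
    exact Prod.ext (Fin.ext (mkF_val pr.1.isLt).symm) rfl
  · fin_cases j
    · exact Or.inl rfl
    · exact Or.inr (Or.inl rfl)

/-- Any edge of `Pt n` has at most one endpoint of degree 2. -/
lemma adj_not_both_deg2 {n : ℕ} {a b : PtVert n} (hab : (Pt n).Adj a b) :
    ¬ (a ∈ Ptdeg2 n ∧ b ∈ Ptdeg2 n) := by
  rintro ⟨ha, hb⟩
  rw [Pt_adj] at hab
  have key : ∀ x y : PtVert n, PtRel n x y → x ∈ Ptdeg2 n → y ∈ Ptdeg2 n → False := by
    intro x y hrel hx hy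
    rcases x with prx | jx
    · rcases y with pry | jy
      · rw [inl_mem_deg2_iff] at hx hy
        rcases hrel with ⟨-, hsucc⟩ | ⟨-, hpar, -, -⟩
        · omega
        · omega
      · exact hrel
    · rcases y with pry | jy
      · rw [inl_mem_deg2_iff] at hy
        rcases hrel with ⟨-, h0⟩ | ⟨-, h2n⟩ <;> omega
      · exact hrel
  rcases hab.2 with h | h
  · exact key a b h ha hb
  · exact key b a h hb ha


section Merge

variable {n : ℕ} {W : Type*} {P : Set (Set (PtVert n))} {p : PtVert n → W}

lemma p_eq_deg3 (hpart : IsPartitionOn (Ptdeg2 n) P) (hp : IsMergeOf P p)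
    {a v : PtVert n} (hv : v ∉ Ptdeg2 n) (h : p a = p v) : a = v := by
  rcases (hp.2 a v).mp h with h' | ⟨B, hB, ha, hv'⟩
  · exact h'
  · exact absurd (hpart.1 B hB hv') hv

lemma p_block_cases (hpart : IsPartitionOn (Ptdeg2 n) P) (hp : IsMergeOf P p)
    {B : Set (PtVert n)} (hB : B ∈ P) {w0 a : PtVert n} (hw : w0 ∈ B)
    (h : p a = p w0) : a ∈ B := by
  rcases (hp.2 a w0).mp h with rfl | ⟨B', hB', ha, hw'⟩
  · exact hw
  · obtain ⟨Bu, -, hu⟩ := hpart.2.1 w0 (hpart.1 B hB hw)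
    rw [hu B' ⟨hB', hw'⟩, ← hu B ⟨hB, hw⟩] at ha
    exact ha

lemma p_eq_of_block (hp : IsMergeOf P p) {B : Set (PtVert n)} (hB : B ∈ P)
    {w0 v : PtVert n} (hw : w0 ∈ B) (hv : v ∈ B) : p v = p w0 := by
  rcases eq_or_ne v w0 with rfl | hne
  · rfl
  · exact (hp.2 v w0).mpr (Or.inr ⟨B, hB, hv, hw⟩)

lemma adj_p_ne (hpart : IsPartitionOn (Ptdeg2 n) P)
    (hnc : ∀ B ∈ P, NoCommon (Pt n) B) (hp : IsMergeOf P p)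
    {a b : PtVert n} (hab : (Pt n).Adj a b) : p a ≠ p b := by
  intro h
  rcases (hp.2 a b).mp h with rfl | ⟨B, hB, ha, hb⟩
  · exact hab.ne rfl
  · rcases eq_or_ne a b with rfl | hne
    · exact hab.ne rfl
    · exact (hnc B hB a ha b hb hne).1 hab

lemma merge_adj_iff {w1 w2 : W} :
    (mergeMap (Pt n) p).Adj w1 w2 ↔
      w1 ≠ w2 ∧ ∃ a b, (Pt n).Adj a b ∧ p a = w1 ∧ p b = w2 := by
  rw [mergeMap, SimpleGraph.fromRel_adj]
  constructor
  · rintro ⟨hne, ⟨a, b, hab, h1, h2⟩ | ⟨a, b, hab, h1, h2⟩⟩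
    · exact ⟨hne, a, b, hab, h1, h2⟩
    · exact ⟨hne, b, a, hab.symm, h2, h1⟩
  · rintro ⟨hne, a, b, hab, h1, h2⟩
    exact ⟨hne, Or.inl ⟨a, b, hab, h1, h2⟩⟩

lemma map_edge_mem (hpart : IsPartitionOn (Ptdeg2 n) P)
    (hnc : ∀ B ∈ P, NoCommon (Pt n) B) (hp : IsMergeOf P p)
    {e : Sym2 (PtVert n)} (he : e ∈ (Pt n).edgeSet) :
    Sym2.map p e ∈ (mergeMap (Pt n) p).edgeSet := by
  induction e with
  | _ a b =>
    rw [SimpleGraph.mem_edgeSet] at he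
    rw [Sym2.map_pair_eq, SimpleGraph.mem_edgeSet, merge_adj_iff]
    exact ⟨adj_p_ne hpart hnc hp he, a, b, he, rfl, rfl⟩

lemma merge_edgeSet_eq (hpart : IsPartitionOn (Ptdeg2 n) P)
    (hnc : ∀ B ∈ P, NoCommon (Pt n) B) (hp : IsMergeOf P p) :
    (mergeMap (Pt n) p).edgeSet = Sym2.map p '' (Pt n).edgeSet := by
  ext e'
  constructor
  · intro he'
    induction e' with
    | _ w1 w2 =>
      rw [SimpleGraph.mem_edgeSet, merge_adj_iff] at he'
      obtain ⟨-, a, b, hab, h1, h2⟩ := he'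
      exact ⟨s(a, b), (SimpleGraph.mem_edgeSet _).mpr hab, by rw [Sym2.map_pair_eq, h1, h2]⟩
  · rintro ⟨e, he, rfl⟩
    exact map_edge_mem hpart hnc hp he

lemma endpoints_eq (hpart : IsPartitionOn (Ptdeg2 n) P)
    (hnc : ∀ B ∈ P, NoCommon (Pt n) B) (hp : IsMergeOf P p)
    {a b a' b' : PtVert n} (hab : (Pt n).Adj a b) (hab' : (Pt n).Adj a' b')
    (h1 : p a = p a') (h2 : p b = p b') : a = a' ∧ b = b' := by
  have key : a = a' := by
    rcases (hp.2 a a').mp h1 with h | ⟨B, hB, ha, ha'⟩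
    · exact h
    · -- both a, a' in block B ⊆ deg2, so b, b' are deg3
      rcases eq_or_ne a a' with h | hne
      · exact h
      · exfalso
        have hb3 : b ∉ Ptdeg2 n := fun hb =>
          adj_not_both_deg2 hab ⟨hpart.1 B hB ha, hb⟩
        have hb3' : b' ∉ Ptdeg2 n := fun hb =>
          adj_not_both_deg2 hab' ⟨hpart.1 B hB ha', hb⟩
        have hbb : b = b' := by
          have := p_eq_deg3 hpart hp hb3' h2
          exact this
        exact (hnc B hB a ha a' ha' hne).2 b ⟨hab, by rw [hbb]; exact hab'⟩
  subst key
  -- now p b = p b'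
  rcases (hp.2 b b').mp h2 with h | ⟨B, hB, hb, hb'⟩
  · exact ⟨rfl, h⟩
  · rcases eq_or_ne b b' with h | hne
    · exact ⟨rfl, h⟩
    · exfalso
      exact (hnc B hB b hb b' hb' hne).2 a ⟨hab.symm, hab'.symm⟩

lemma injOn_map_edge (hpart : IsPartitionOn (Ptdeg2 n) P)
    (hnc : ∀ B ∈ P, NoCommon (Pt n) B) (hp : IsMergeOf P p) :
    Set.InjOn (Sym2.map p) (Pt n).edgeSet := by
  intro e he e' he' hEq
  induction e with
  | _ a b =>
    induction e' with
    | _ a' b' =>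
      rw [SimpleGraph.mem_edgeSet] at he he'
      rw [Sym2.map_pair_eq, Sym2.map_pair_eq, Sym2.eq_iff] at hEq
      rcases hEq with ⟨h1, h2⟩ | ⟨h1, h2⟩
      · obtain ⟨rfl, rfl⟩ := endpoints_eq hpart hnc hp he he' h1 h2
        rfl
      · obtain ⟨rfl, rfl⟩ := endpoints_eq hpart hnc hp he he'.symm h1 h2
        rw [Sym2.eq_swap]

end Merge


noncomputable def fW (k n : ℕ) {W : Type*} (p : PtVert n → W) : Sym2 W → ℕ :=
  fun e' => ∑ᶠ e ∈ ((Pt n).edgeSet ∩ (Sym2.map p ⁻¹' {e'})), glab k n e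

section Merge2

variable {k n : ℕ} {W : Type*} {P : Set (Set (PtVert n))} {p : PtVert n → W}

lemma fW_map (hpart : IsPartitionOn (Ptdeg2 n) P)
    (hnc : ∀ B ∈ P, NoCommon (Pt n) B) (hp : IsMergeOf P p)
    {e : Sym2 (PtVert n)} (he : e ∈ (Pt n).edgeSet) :
    fW k n p (Sym2.map p e) = glab k n e := by
  have hset : (Pt n).edgeSet ∩ (Sym2.map p ⁻¹' {Sym2.map p e}) = {e} := by
    ext e₂
    constructor
    · rintro ⟨h1, h2⟩
      exact injOn_map_edge hpart hnc hp h1 he h2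
    · rintro rfl
      exact ⟨he, rfl⟩
  rw [fW, hset, finsum_mem_singleton]

lemma adj_of_two_mem {V : Type*} {G : SimpleGraph V} {e : Sym2 V} {v v' : V}
    (he : e ∈ G.edgeSet) (hv : v ∈ e) (hv' : v' ∈ e) (hne : v ≠ v') : G.Adj v v' := by
  induction e with
  | _ a b =>
    rw [SimpleGraph.mem_edgeSet] at he
    rw [Sym2.mem_iff] at hv hv'
    rcases hv with rfl | rfl <;> rcases hv' with rfl | rfl
    · exact absurd rfl hne
    · exact he
    · exact he.symm
    · exact absurd rfl hne

lemma incidence_merge_deg3 (hpart : IsPartitionOn (Ptdeg2 n) P)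
    (hnc : ∀ B ∈ P, NoCommon (Pt n) B) (hp : IsMergeOf P p)
    {v : PtVert n} (hv : v ∉ Ptdeg2 n) :
    (mergeMap (Pt n) p).incidenceSet (p v) = Sym2.map p '' (Pt n).incidenceSet v := by
  ext e'
  constructor
  · rintro ⟨he', hm⟩
    rw [merge_edgeSet_eq hpart hnc hp] at he'
    obtain ⟨e, he, rfl⟩ := he'
    refine ⟨e, ⟨he, ?_⟩, rfl⟩
    rw [Sym2.mem_map] at hm
    obtain ⟨a, ha, hpa⟩ := hm
    have : a = v := p_eq_deg3 hpart hp hv hpa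
    rwa [← this]
  · rintro ⟨e, ⟨he, hv'⟩, rfl⟩
    refine ⟨map_edge_mem hpart hnc hp he, ?_⟩
    rw [Sym2.mem_map]
    exact ⟨v, hv', rfl⟩

lemma fplus_merge_deg3 (hpart : IsPartitionOn (Ptdeg2 n) P)
    (hnc : ∀ B ∈ P, NoCommon (Pt n) B) (hp : IsMergeOf P p)
    {v : PtVert n} (hv : v ∉ Ptdeg2 n) :
    fplus (mergeMap (Pt n) p) (fW k n p) (p v) = fplus (Pt n) (glab k n) v := by
  rw [fplus, fplus, incidence_merge_deg3 hpart hnc hp hv,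
    finsum_mem_image ((injOn_map_edge hpart hnc hp).mono
      (SimpleGraph.incidenceSet_subset _ v))]
  exact finsum_mem_congr rfl fun e he => fW_map hpart hnc hp (he.1)

lemma incidence_merge_block (hpart : IsPartitionOn (Ptdeg2 n) P)
    (hnc : ∀ B ∈ P, NoCommon (Pt n) B) (hp : IsMergeOf P p)
    {B : Set (PtVert n)} (hB : B ∈ P) {w0 : PtVert n} (hw : w0 ∈ B) :
    (mergeMap (Pt n) p).incidenceSet (p w0)
      = Sym2.map p '' (⋃ v ∈ B, (Pt n).incidenceSet v) := by
  ext e'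
  constructor
  · rintro ⟨he', hm⟩
    rw [merge_edgeSet_eq hpart hnc hp] at he'
    obtain ⟨e, he, rfl⟩ := he'
    rw [Sym2.mem_map] at hm
    obtain ⟨a, ha, hpa⟩ := hm
    have haB : a ∈ B := p_block_cases hpart hp hB hw hpa
    exact ⟨e, Set.mem_biUnion haB ⟨he, ha⟩, rfl⟩
  · rintro ⟨e, hmem, rfl⟩
    obtain ⟨v, hvB, he, hv⟩ := Set.mem_iUnion₂.mp hmem
    refine ⟨map_edge_mem hpart hnc hp he, ?_⟩
    rw [Sym2.mem_map]
    exact ⟨v, hv, p_eq_of_block hp hB hw hvB⟩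

lemma fplus_deg2_val (hn : n = 2*k) {v : PtVert n} (hv : v ∈ Ptdeg2 n) :
    fplus (Pt n) (glab k n) v = 8*k+5 := by
  rcases deg2_forms hv with rfl | rfl | ⟨c, i, hi, h2, rfl⟩
  · exact fplus_vX hn
  · exact fplus_vY hn
  · exact fplus_vC_odd hn hi h2

lemma fplus_merge_block (hn : n = 2*k) (hpart : IsPartitionOn (Ptdeg2 n) P)
    (hnc : ∀ B ∈ P, NoCommon (Pt n) B) (hp : IsMergeOf P p)
    {B : Set (PtVert n)} (hB : B ∈ P) {w0 : PtVert n} (hw : w0 ∈ B) :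
    fplus (mergeMap (Pt n) p) (fW k n p) (p w0) = B.ncard * (8*k+5) := by
  classical
  rw [fplus, incidence_merge_block hpart hnc hp hB hw,
    finsum_mem_image ((injOn_map_edge hpart hnc hp).mono ?_)]
  swap
  · intro e he
    obtain ⟨v, -, he', -⟩ := Set.mem_iUnion₂.mp he
    exact he'
  rw [finsum_mem_biUnion ?_ (Set.toFinite B) (fun v _ => Set.toFinite _)]
  swap
  · intro v hv v' hv' hne
    rw [Function.onFun]
    rw [Set.disjoint_left]
    rintro e ⟨he, hve⟩ ⟨-, hv'e⟩
    have hadj := adj_of_two_mem he hve hv'e hne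
    exact (hnc B hB v hv v' hv' hne).1 hadj
  have hconst : ∀ v ∈ B, (∑ᶠ e ∈ (Pt n).incidenceSet v, fW k n p (Sym2.map p e)) = 8*k+5 := by
    intro v hv
    have : (∑ᶠ e ∈ (Pt n).incidenceSet v, fW k n p (Sym2.map p e))
        = ∑ᶠ e ∈ (Pt n).incidenceSet v, glab k n e :=
      finsum_mem_congr rfl fun e he => fW_map hpart hnc hp he.1
    rw [this]
    exact fplus_deg2_val hn (hpart.1 B hB hv)
  rw [finsum_mem_congr rfl hconst]
  have hBfin : B.Finite := Set.toFinite B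
  rw [← hBfin.coe_toFinset, finsum_mem_coe_finset, Finset.sum_const, smul_eq_mul,
    Set.ncard_coe_finset]

end Merge2


section Merge3

variable {k n : ℕ} {W : Type*} {P : Set (Set (PtVert n))} {p : PtVert n → W}

lemma merge_edgeSet_ncard (hn : n = 2*k) (hpart : IsPartitionOn (Ptdeg2 n) P)
    (hnc : ∀ B ∈ P, NoCommon (Pt n) B) (hp : IsMergeOf P p) :
    (mergeMap (Pt n) p).edgeSet.ncard = 10*k+5 := by
  rw [merge_edgeSet_eq hpart hnc hp, Set.ncard_image_of_injOn (injOn_map_edge hpart hnc hp),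
    Pt_edgeSet_ncard hn]

lemma fW_bijOn (hn : n = 2*k) (hpart : IsPartitionOn (Ptdeg2 n) P)
    (hnc : ∀ B ∈ P, NoCommon (Pt n) B) (hp : IsMergeOf P p) :
    Set.BijOn (fW k n p) (mergeMap (Pt n) p).edgeSet
      (Set.Icc 1 ((mergeMap (Pt n) p).edgeSet.ncard)) := by
  rw [merge_edgeSet_ncard hn hpart hnc hp, merge_edgeSet_eq hpart hnc hp]
  refine ⟨?_, ?_, ?_⟩
  · rintro e' ⟨e, he, rfl⟩
    rw [fW_map hpart hnc hp he]
    exact (glab_bijOn hn).mapsTo he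
  · rintro e' ⟨e, he, rfl⟩ e'' ⟨e2, he2, rfl⟩ hEq
    rw [fW_map hpart hnc hp he, fW_map hpart hnc hp he2] at hEq
    rw [(glab_bijOn hn).injOn he he2 hEq]
  · intro l hl
    obtain ⟨e, he, hEq⟩ := (glab_bijOn hn).surjOn hl
    exact ⟨Sym2.map p e, ⟨e, he, rfl⟩, by rw [fW_map hpart hnc hp he]; exact hEq⟩

lemma fplus_merge_deg3_val (hn : n = 2*k) (hpart : IsPartitionOn (Ptdeg2 n) P)
    (hnc : ∀ B ∈ P, NoCommon (Pt n) B) (hp : IsMergeOf P p)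
    {c : Fin 2} {i : ℕ} (hi : i ≤ 2*n) (h2 : i % 2 = 0) :
    fplus (mergeMap (Pt n) p) (fW k n p) (p (vC n c i))
      = if (i % 4 = 0 ↔ (c : ℕ) = 0) then 19*k+11 else 15*k+9 := by
  rw [fplus_merge_deg3 hpart hnc hp (by rw [vC_mem_deg2_iff hi]; omega),
    fplus_vC_even hn hi h2]

lemma deg3_adj_structure {c c' : Fin 2} {i i' : ℕ} (hi : i ≤ 2*n) (hi' : i' ≤ 2*n)
    (h2 : i % 2 = 0) (h2' : i' % 2 = 0)
    (hadj : (Pt n).Adj (vC n c i) (vC n c' i')) : i = i' ∧ c ≠ c' := by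
  rw [Pt_adj] at hadj
  obtain ⟨hne, hrel⟩ := hadj
  have key : ∀ (d d' : Fin 2) (j j' : ℕ), j ≤ 2*n → j' ≤ 2*n → j % 2 = 0 → j' % 2 = 0 →
      PtRel n (vC n d j) (vC n d' j') → j = j' ∧ d = 0 ∧ d' = 1 := by
    intro d d' j j' hj hj' hp2 hp2' hrel
    rcases hrel with ⟨hc, hsucc⟩ | ⟨hfin, hpar, hc0, hc1⟩
    · exfalso
      have hv1 : ((mkF n j : Fin (2*n+1)) : ℕ) = j := mkF_val (by omega)
      have hv2 : ((mkF n j' : Fin (2*n+1)) : ℕ) = j' := mkF_val (by omega)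
      have : j + 1 = j' := by
        have := hsucc
        simp only [vC] at this
        omega
      omega
    · have hv : j = j' := by
        have : ((mkF n j : Fin (2*n+1)) : ℕ) = ((mkF n j' : Fin (2*n+1)) : ℕ) := by
          simp only [vC] at hfin
          rw [hfin]
        rwa [mkF_val (by omega), mkF_val (by omega)] at this
      exact ⟨hv, hc0, hc1⟩
  rcases hrel with h | h
  · obtain ⟨h1, h2, h3⟩ := key c c' i i' hi hi' h2 h2' h
    exact ⟨h1, by rw [h2, h3]; decide⟩
  · obtain ⟨h1, h2, h3⟩ := key c' c i' i hi' hi h2' h2 h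
    exact ⟨h1.symm, by rw [h2, h3]; decide⟩

lemma sC_ne_AB {s : ℕ} (hs2 : 2 ≤ s) {k : ℕ} :
    s * (8*k+5) ≠ 15*k+9 ∧ s * (8*k+5) ≠ 19*k+11 := by
  rcases eq_or_lt_of_le hs2 with rfl | h3
  · constructor <;> omega
  · have h3' : 3 * (8*k+5) ≤ s * (8*k+5) := Nat.mul_le_mul_right _ (by omega)
    obtain ⟨t, ht⟩ : ∃ t, t = s * (8*k+5) := ⟨_, rfl⟩
    rw [← ht] at h3' ⊢
    omega

lemma merged_adj_values (hn : n = 2*k) (hpart : IsPartitionOn (Ptdeg2 n) P)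
    (hnc : ∀ B ∈ P, NoCommon (Pt n) B) (hp : IsMergeOf P p)
    {s : ℕ} (hs2 : 2 ≤ s) (hBcard : ∀ B ∈ P, B.ncard = s) :
    ∀ ⦃w1 w2 : W⦄, (mergeMap (Pt n) p).Adj w1 w2 →
      fplus (mergeMap (Pt n) p) (fW k n p) w1 ≠ fplus (mergeMap (Pt n) p) (fW k n p) w2 := by
  intro w1 w2 hadj
  obtain ⟨-, a, b, hab, rfl, rfl⟩ := merge_adj_iff.mp hadj
  have hval2 : ∀ v : PtVert n, v ∈ Ptdeg2 n →
      fplus (mergeMap (Pt n) p) (fW k n p) (p v) = s * (8*k+5) := by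
    intro v hv
    obtain ⟨B, ⟨hBP, hvB⟩, -⟩ := hpart.2.1 v hv
    rw [fplus_merge_block hn hpart hnc hp hBP hvB, hBcard B hBP]
  rcases vert_cases a with ⟨c, i, hi, h2, rfl⟩ | ha2
  · rcases vert_cases b with ⟨c', i', hi', h2', rfl⟩ | hb2
    · -- both degree 3 : rung
      obtain ⟨rfl, hcc⟩ := deg3_adj_structure hi hi' h2 h2' hab
      rw [fplus_merge_deg3_val hn hpart hnc hp hi h2,
        fplus_merge_deg3_val hn hpart hnc hp hi h2']
      have hc1 : (c : ℕ) ≤ 1 := by omega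
      have hc2 : (c' : ℕ) ≤ 1 := by omega
      have hc3 : (c : ℕ) ≠ (c' : ℕ) := fun h => hcc (Fin.ext h)
      split_ifs with hA hB <;> omega
    · rw [fplus_merge_deg3_val hn hpart hnc hp hi h2, hval2 b hb2]
      have := sC_ne_AB hs2 (k := k)
      split_ifs <;> omega
  · rcases vert_cases b with ⟨c', i', hi', h2', rfl⟩ | hb2
    · rw [fplus_merge_deg3_val hn hpart hnc hp hi' h2', hval2 a ha2]
      have := sC_ne_AB hs2 (k := k)
      split_ifs <;> omega
    · exact absurd ⟨ha2, hb2⟩ (adj_not_both_deg2 hab)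

lemma range_fW (hn : n = 2*k) (hpart : IsPartitionOn (Ptdeg2 n) P)
    (hnc : ∀ B ∈ P, NoCommon (Pt n) B) (hp : IsMergeOf P p)
    {s : ℕ} (hBcard : ∀ B ∈ P, B.ncard = s) (hPne : P.Nonempty) :
    Set.range (fplus (mergeMap (Pt n) p) (fW k n p))
      = {15*k+9, 19*k+11, s * (8*k+5)} := by
  ext val
  constructor
  · rintro ⟨w, rfl⟩
    obtain ⟨v, rfl⟩ := hp.1 w
    rcases vert_cases v with ⟨c, i, hi, h2, rfl⟩ | hv2
    · rw [fplus_merge_deg3_val hn hpart hnc hp hi h2]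
      split_ifs
      · exact Or.inr (Or.inl rfl)
      · exact Or.inl rfl
    · obtain ⟨B, ⟨hBP, hvB⟩, -⟩ := hpart.2.1 v hv2
      rw [fplus_merge_block hn hpart hnc hp hBP hvB, hBcard B hBP]
      exact Or.inr (Or.inr rfl)
  · rintro (rfl | rfl | rfl)
    · refine ⟨p (vC n 1 0), ?_⟩
      rw [fplus_merge_deg3_val hn hpart hnc hp (by omega) (by omega)]
      rw [if_neg (by simp)]
    · refine ⟨p (vC n 0 0), ?_⟩
      rw [fplus_merge_deg3_val hn hpart hnc hp (by omega) (by omega)]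
      rw [if_pos (by simp)]
    · obtain ⟨B, hBP⟩ := hPne
      obtain ⟨w0, hw0⟩ := hpart.2.2 B hBP
      refine ⟨p w0, ?_⟩
      rw [fplus_merge_block hn hpart hnc hp hBP hw0, hBcard B hBP]

lemma range_fW_ncard (hn : n = 2*k) (hpart : IsPartitionOn (Ptdeg2 n) P)
    (hnc : ∀ B ∈ P, NoCommon (Pt n) B) (hp : IsMergeOf P p)
    {s : ℕ} (hs2 : 2 ≤ s) (hBcard : ∀ B ∈ P, B.ncard = s) (hPne : P.Nonempty) :
    (Set.range (fplus (mergeMap (Pt n) p) (fW k n p))).ncard = 3 := by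
  rw [range_fW hn hpart hnc hp hBcard hPne]
  have h := sC_ne_AB hs2 (k := k)
  exact Set.ncard_eq_three.mpr ⟨_, _, _, by omega, h.1.symm, h.2.symm, rfl⟩

end Merge3


section Merge4

variable {k n : ℕ} {W : Type*} {P : Set (Set (PtVert n))} {p : PtVert n → W}

lemma Pt_adj_vX_vC (c : Fin 2) : (Pt n).Adj (vX n) (vC n c 0) := by
  rw [Pt_adj]
  exact ⟨by simp [vX, vC], Or.inl (Or.inl ⟨rfl, mkF_val (by omega)⟩)⟩

lemma Pt_adj_rung0 : (Pt n).Adj (vC n 0 0) (vC n 1 0) := by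
  rw [Pt_adj]
  refine ⟨vC_ne_vC (by omega) (by omega) (Or.inr (by decide)),
    Or.inl (Or.inr ⟨rfl, ?_, rfl, rfl⟩)⟩
  show ((mkF n 0 : Fin (2*n+1)) : ℕ) % 2 = 0
  rw [mkF_val (by omega)]

lemma vC0_not_deg2 {c : Fin 2} : vC n c 0 ∉ Ptdeg2 n := by
  rw [vC_mem_deg2_iff (by omega)]
  omega

lemma lower_bound (hpart : IsPartitionOn (Ptdeg2 n) P)
    (hnc : ∀ B ∈ P, NoCommon (Pt n) B) (hp : IsMergeOf P p)
    (f' : Sym2 W → ℕ)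
    (hdist : ∀ ⦃u w : W⦄, (mergeMap (Pt n) p).Adj u w →
      fplus (mergeMap (Pt n) p) f' u ≠ fplus (mergeMap (Pt n) p) f' w) :
    3 ≤ (Set.range (fplus (mergeMap (Pt n) p) f')).ncard := by
  have hW : Finite W := Finite.of_surjective p hp.1
  have d12 : p (vX n) ≠ p (vC n 0 0) := by
    intro h
    have := p_eq_deg3 hpart hp vC0_not_deg2 h
    exact absurd this (by simp [vX, vC])
  have d13 : p (vX n) ≠ p (vC n 1 0) := by
    intro h
    have := p_eq_deg3 hpart hp vC0_not_deg2 h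
    exact absurd this (by simp [vX, vC])
  have d23 : p (vC n 0 0) ≠ p (vC n 1 0) := by
    intro h
    have := p_eq_deg3 hpart hp vC0_not_deg2 h
    exact vC_ne_vC (by omega) (by omega) (Or.inr (by decide)) this
  have hA12 : (mergeMap (Pt n) p).Adj (p (vX n)) (p (vC n 0 0)) :=
    merge_adj_iff.mpr ⟨d12, _, _, Pt_adj_vX_vC 0, rfl, rfl⟩
  have hA13 : (mergeMap (Pt n) p).Adj (p (vX n)) (p (vC n 1 0)) :=
    merge_adj_iff.mpr ⟨d13, _, _, Pt_adj_vX_vC 1, rfl, rfl⟩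
  have hA23 : (mergeMap (Pt n) p).Adj (p (vC n 0 0)) (p (vC n 1 0)) :=
    merge_adj_iff.mpr ⟨d23, _, _, Pt_adj_rung0, rfl, rfl⟩
  set F := fplus (mergeMap (Pt n) p) f' with hF
  have hsub : ({F (p (vX n)), F (p (vC n 0 0)), F (p (vC n 1 0))} : Set ℕ)
      ⊆ Set.range F := by
    rintro x (rfl | rfl | rfl) <;> exact Set.mem_range_self _
  have h3 : ({F (p (vX n)), F (p (vC n 0 0)), F (p (vC n 1 0))} : Set ℕ).ncard = 3 :=
    Set.ncard_eq_three.mpr ⟨_, _, _, hdist hA12, hdist hA13, hdist hA23, rfl⟩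
  rw [← h3]
  exact Set.ncard_le_ncard hsub (Set.finite_range F)

end Merge4


/-- `Pt³(r, n)`: for even `n = 2k ≥ 2`, merging the `2n+2` degree-2 vertices of
`Pt(n)` along a partition into `r ≥ 2` blocks of equal size `s = (2n+2)/r`
(with `2 ≤ s ≤ n+1`, blocks independent without common neighbors) gives a
graph with `χ_{la} = 3`. -/
theorem chiLA_Pt_merge_deg2 (n k : ℕ) (hn : n = 2 * k) (hk : 1 ≤ k)
    (r s : ℕ) (hr : 2 ≤ r) (hs2 : 2 ≤ s) (hsn : s ≤ n + 1)
    (hrs : r * s = 2 * n + 2)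
    (P : Set (Set (PtVert n)))
    (hpart : IsPartitionOn (Ptdeg2 n) P)
    (hPcard : P.ncard = r) (hBcard : ∀ B ∈ P, B.ncard = s)
    (hnc : ∀ B ∈ P, NoCommon (Pt n) B)
    (W : Type*) (p : PtVert n → W) (hp : IsMergeOf P p) :
    chiLA (mergeMap (Pt n) p) = 3 := by
  have hPne : P.Nonempty := Set.nonempty_of_ncard_ne_zero (by omega)
  have mem3 : 3 ∈ {c : ℕ | ∃ f : Sym2 W → ℕ,
      IsLocalAntimagic (mergeMap (Pt n) p) f ∧
      (Set.range (fplus (mergeMap (Pt n) p) f)).ncard = c} :=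
    ⟨fW k n p, ⟨fW_bijOn hn hpart hnc hp, merged_adj_values hn hpart hnc hp hs2 hBcard⟩,
      range_fW_ncard hn hpart hnc hp hs2 hBcard hPne⟩
  refine le_antisymm (Nat.sInf_le mem3) (le_csInf ⟨3, mem3⟩ ?_)
  rintro c ⟨f', ⟨-, hdist⟩, rfl⟩
  exact lower_bound hpart hnc hp f' hdist

end LocalAntimagic
end

section
/- Let n = 2k ≥ 8 be even with n+1 = rs, r, s ≥ 3, and let f be a local antimagic labeling of the triangular bracelet TB(n) such that f⁺(v) = 20k+12 for every degree-4 vertex v and f⁺(v) ∈ {9k+6, 21k+12} for every degree-3 vertex v. Let P be a partition of the n+1 degree-4 vertices of TB(n) into r blocks of size s such that no two vertices in the same block are adjacent or have a common neighbor. Then the generalized bracelet GB(n) obtained from TB(n) by merging each block of P into a single vertex (of degree 4s) satisfies χ_la(GB(n)) = 3. -/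
namespace LocalAntimagic

variable {V W : Type*}

/-- The degree-3 vertices of `TB(n)`: the vertices `u_{2j-1}, v_{2j-1}`. -/
def TBdeg3 (n : ℕ) : Set (TBVert n) :=
  {v | ∃ q, v = Sum.inl q}

/-- The degree-4 vertices of `TB(n)`: the vertices `z_0, z_2, …, z_{2n}`. -/
def TBdeg4 (n : ℕ) : Set (TBVert n) :=
  {v | ∃ j, v = Sum.inr j}

section MergeAux

lemma mergeMap_adj_iff (G : SimpleGraph V) (p : V → W) {a b : W} :
    (mergeMap G p).Adj a b ↔ a ≠ b ∧ ∃ x y, G.Adj x y ∧ p x = a ∧ p y = b := by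
  simp only [mergeMap, SimpleGraph.fromRel_adj]
  constructor
  · rintro ⟨hne, ⟨x, y, hxy, hx, hy⟩ | ⟨x, y, hxy, hx, hy⟩⟩
    · exact ⟨hne, x, y, hxy, hx, hy⟩
    · exact ⟨hne, y, x, hxy.symm, hy, hx⟩
  · rintro ⟨hne, x, y, hxy, hx, hy⟩
    exact ⟨hne, Or.inl ⟨x, y, hxy, hx, hy⟩⟩

end MergeAux

/-- Generalized bracelet `GB(n)`: for even `n = 2k ≥ 8` with `n+1 = rs`,
`r, s ≥ 3`, given a local antimagic labeling of `TB(n)` whose induced labels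
are `20k+12` on all degree-4 vertices and `9k+6` or `21k+12` on the degree-3
vertices, merging the `n+1` degree-4 vertices along a partition into `r`
blocks of size `s` (blocks independent without common neighbors) gives a
graph with `χ_{la} = 3`. -/
theorem chiLA_GB (n k : ℕ) (hn : n = 2 * k) (hk : 4 ≤ k)
    (r s : ℕ) (hr : 3 ≤ r) (hs : 3 ≤ s) (hrs : r * s = n + 1)
    (f : Sym2 (TBVert n) → ℕ) (hf : IsLocalAntimagic (TB n) f)
    (hdeg4 : ∀ v ∈ TBdeg4 n, fplus (TB n) f v = 20 * k + 12)
    (hdeg3 : ∀ v ∈ TBdeg3 n,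
      fplus (TB n) f v = 9 * k + 6 ∨ fplus (TB n) f v = 21 * k + 12)
    (P : Set (Set (TBVert n)))
    (hpart : IsPartitionOn (TBdeg4 n) P)
    (hPcard : P.ncard = r) (hBcard : ∀ B ∈ P, B.ncard = s)
    (hnc : ∀ B ∈ P, NoCommon (TB n) B)
    (W : Type*) (p : TBVert n → W) (hp : IsMergeOf P p) :
    chiLA (mergeMap (TB n) p) = 3 := by
  classical
  set G := TB n with hG
  have hpeq : ∀ x y : TBVert n, p x = p y ↔ (x = y ∨ ∃ B ∈ P, x ∈ B ∧ y ∈ B) := hp.2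
  have hblocks4 : ∀ B ∈ P, B ⊆ TBdeg4 n := hpart.1
  have hinl_norm : ∀ (q' : Fin (n+1) × Fin 2) (x : TBVert n),
      p x = p (Sum.inl q') → x = Sum.inl q' := by
    intro q' x hx
    rcases (hpeq x _).1 hx with h | ⟨B, hB, hxB, hqB⟩
    · exact h
    · rcases hblocks4 B hB hqB with ⟨j, hj⟩
      exact absurd hj (by simp)
  have hrr : ∀ (j j' : Fin (n+1)), ¬ G.Adj (Sum.inr j) (Sum.inr j') := by
    intro j j' h
    rw [hG, TB, SimpleGraph.fromRel_adj] at h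
    rcases h.2 with h' | h' <;> exact h'
  have hncc : ∀ B ∈ P, ∀ x ∈ B, ∀ y ∈ B, x ≠ y →
      ¬ G.Adj x y ∧ ∀ z, ¬ (G.Adj x z ∧ G.Adj y z) :=
    fun B hB x hx y hy hne => hnc B hB x hx y hy hne
  have hadj_ne : ∀ {x y : TBVert n}, G.Adj x y → p x ≠ p y := by
    intro x y hxy hpxy
    rcases (hpeq x y).1 hpxy with h | ⟨B, hB, hxB, hyB⟩
    · exact hxy.ne h
    · exact (hncc B hB x hxB y hyB hxy.ne).1 hxy
  have key : ∀ {x y x' y' : TBVert n}, G.Adj x y → G.Adj x' y' →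
      p x = p x' → p y = p y' → x = x' ∧ y = y' := by
    intro x y x' y' ha hb hxx hyy
    have hx : x = x' := by
      by_contra hne
      rcases (hpeq x x').1 hxx with h | ⟨B, hB, h1, h2⟩
      · exact hne h
      by_cases hyeq : y = y'
      · subst hyeq
        exact (hncc B hB x h1 x' h2 hne).2 y ⟨ha, hb⟩
      · rcases (hpeq y y').1 hyy with h | ⟨B', hB', h1', h2'⟩
        · exact hyeq h
        rcases hblocks4 B hB h1 with ⟨j, hj⟩
        rcases hblocks4 B' hB' h1' with ⟨j', hj'⟩
        rw [hj, hj'] at ha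
        exact hrr j j' ha
    subst hx
    refine ⟨rfl, ?_⟩
    by_contra hne
    rcases (hpeq y y').1 hyy with h | ⟨B', hB', h1', h2'⟩
    · exact hne h
    exact (hncc B' hB' y h1' y' h2' hne).2 x ⟨ha.symm, hb.symm⟩
  have hinj : Set.InjOn (Sym2.map p) G.edgeSet := by
    intro e1 he1 e2 he2 heq
    induction e1 using Sym2.ind with | _ x y => ?_
    induction e2 using Sym2.ind with | _ x' y' => ?_
    rw [SimpleGraph.mem_edgeSet] at he1 he2
    rw [Sym2.map_pair_eq, Sym2.map_pair_eq, Sym2.eq_iff] at heq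
    rcases heq with ⟨h1, h2⟩ | ⟨h1, h2⟩
    · obtain ⟨rfl, rfl⟩ := key he1 he2 h1 h2
      rfl
    · obtain ⟨rfl, rfl⟩ := key he1 he2.symm h1 h2
      exact Sym2.eq_swap
  have hES : (mergeMap G p).edgeSet = Sym2.map p '' G.edgeSet := by
    ext e
    induction e using Sym2.ind with | _ a b => ?_
    rw [SimpleGraph.mem_edgeSet, mergeMap_adj_iff]
    constructor
    · rintro ⟨hne, x, y, hxy, rfl, rfl⟩
      exact ⟨s(x, y), hxy, rfl⟩
    · rintro ⟨e, he, hmap⟩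
      induction e using Sym2.ind with | _ x y => ?_
      rw [SimpleGraph.mem_edgeSet] at he
      rw [Sym2.map_pair_eq, Sym2.eq_iff] at hmap
      rcases hmap with ⟨hx, hy⟩ | ⟨hx, hy⟩
      · refine ⟨?_, x, y, he, hx, hy⟩
        rw [← hx, ← hy]; exact hadj_ne he
      · refine ⟨?_, y, x, he.symm, hy, hx⟩
        rw [← hx, ← hy]; exact fun h => hadj_ne he h.symm
  obtain ⟨g, hgf⟩ : ∃ g : Sym2 W → ℕ, ∀ e ∈ G.edgeSet, g (Sym2.map p e) = f e := by
    refine ⟨fun e' => if h : ∃ e0 ∈ G.edgeSet, Sym2.map p e0 = e' then f h.choose else 0,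
      fun e he => ?_⟩
    have hmem : ∃ e0 ∈ G.edgeSet, Sym2.map p e0 = Sym2.map p e := ⟨e, he, rfl⟩
    show (if h : ∃ e0 ∈ G.edgeSet, Sym2.map p e0 = Sym2.map p e then f h.choose else 0) = f e
    rw [dif_pos hmem]
    exact congrArg f (hinj hmem.choose_spec.1 he hmem.choose_spec.2)
  have hinc : ∀ w : W, (mergeMap G p).incidenceSet w
      = Sym2.map p '' (⋃ v ∈ (p ⁻¹' {w}), G.incidenceSet v) := by
    intro w
    ext e
    simp only [SimpleGraph.incidenceSet, Set.mem_sep_iff, Set.mem_image, Set.mem_iUnion,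
      Set.mem_preimage, Set.mem_singleton_iff, hES]
    constructor
    · rintro ⟨⟨e0, he0, rfl⟩, hw⟩
      rw [Sym2.mem_map] at hw
      obtain ⟨v, hv, hpv⟩ := hw
      exact ⟨e0, ⟨v, hpv, he0, hv⟩, rfl⟩
    · rintro ⟨e0, ⟨v, hpv, he0, hv⟩, rfl⟩
      exact ⟨⟨e0, he0, rfl⟩, Sym2.mem_map.2 ⟨v, hv, hpv⟩⟩
  have hval : ∀ (S : Set (TBVert n)) (w : W), p ⁻¹' {w} = S →
      (S.PairwiseDisjoint (G.incidenceSet ·)) →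
      fplus (mergeMap G p) g w = ∑ᶠ v ∈ S, fplus G f v := by
    intro S w hSw hdisj
    have hsub : (⋃ v ∈ S, G.incidenceSet v) ⊆ G.edgeSet := by
      intro e he
      simp only [Set.mem_iUnion] at he
      obtain ⟨v, _, he⟩ := he
      exact G.incidenceSet_subset v he
    calc fplus (mergeMap G p) g w
        = ∑ᶠ e ∈ Sym2.map p '' (⋃ v ∈ S, G.incidenceSet v), g e := by
          rw [fplus, hinc w, hSw]
      _ = ∑ᶠ e ∈ (⋃ v ∈ S, G.incidenceSet v), g (Sym2.map p e) :=
          finsum_mem_image (hinj.mono hsub)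
      _ = ∑ᶠ e ∈ (⋃ v ∈ S, G.incidenceSet v), f e :=
          finsum_mem_congr rfl (fun e he => hgf e (hsub he))
      _ = ∑ᶠ v ∈ S, ∑ᶠ e ∈ G.incidenceSet v, f e :=
          finsum_mem_biUnion hdisj (Set.toFinite _) (fun v _ => Set.toFinite _)
      _ = ∑ᶠ v ∈ S, fplus G f v := rfl
  have hfiber3 : ∀ q' : Fin (n+1) × Fin 2, p ⁻¹' {p (Sum.inl q')} = {Sum.inl q'} := by
    intro q'; ext x
    simp only [Set.mem_preimage, Set.mem_singleton_iff]
    exact ⟨fun h => hinl_norm q' x h, fun h => h ▸ rfl⟩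
  have hval3 : ∀ q' : Fin (n+1) × Fin 2,
      fplus (mergeMap G p) g (p (Sum.inl q')) = fplus G f (Sum.inl q') := by
    intro q'
    rw [hval {Sum.inl q'} _ (hfiber3 q') (Set.pairwiseDisjoint_singleton _ _),
      finsum_mem_singleton]
  have hval4 : ∀ j : Fin (n+1),
      fplus (mergeMap G p) g (p (Sum.inr j)) = s * (20 * k + 12) := by
    intro j
    obtain ⟨B, ⟨hB, hjB⟩, huniq⟩ := hpart.2.1 (Sum.inr j) ⟨j, rfl⟩
    have hfiber : p ⁻¹' {p (Sum.inr j)} = B := by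
      ext x
      simp only [Set.mem_preimage, Set.mem_singleton_iff]
      constructor
      · intro h
        rcases (hpeq x _).1 h with rfl | ⟨B', hB', hxB', hjB'⟩
        · exact hjB
        · rwa [huniq B' ⟨hB', hjB'⟩] at hxB'
      · intro hx
        exact (hpeq x _).2 (Or.inr ⟨B, hB, hx, hjB⟩)
    have hdisj : B.PairwiseDisjoint (G.incidenceSet ·) := by
      intro x hx y hy hne
      rw [Function.onFun, Set.disjoint_left]
      intro e hex hey
      exact (hncc B hB x hx y hy hne).1 (G.adj_of_mem_incidenceSet hne hex hey)
    have hBfin : B.Finite := Set.toFinite B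
    rw [hval B _ hfiber hdisj,
      finsum_mem_congr rfl (fun v hv => hdeg4 v (hblocks4 B hB hv)),
      ← hBfin.coe_toFinset, finsum_mem_coe_finset, Finset.sum_const, smul_eq_mul,
      ← Set.ncard_eq_toFinset_card B hBfin, hBcard B hB]
  -- local antimagic property of g
  have hncardE : (mergeMap G p).edgeSet.ncard = G.edgeSet.ncard := by
    rw [hES, Set.ncard_image_of_injOn hinj]
  have hbij : Set.BijOn g (mergeMap G p).edgeSet
      (Set.Icc 1 (mergeMap G p).edgeSet.ncard) := by
    rw [hncardE, hES]
    obtain ⟨hmapsf, hinjf, hsurf⟩ := hf.1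
    refine ⟨?_, ?_, ?_⟩
    · rintro e' ⟨e, he, rfl⟩
      rw [hgf e he]; exact hmapsf he
    · rintro e1' ⟨e1, he1, rfl⟩ e2' ⟨e2, he2, rfl⟩ hgeq
      rw [hgf e1 he1, hgf e2 he2] at hgeq
      rw [hinjf he1 he2 hgeq]
    · intro i hi
      obtain ⟨e, he, hfe⟩ := hsurf hi
      exact ⟨Sym2.map p e, ⟨e, he, rfl⟩, by rw [hgf e he, hfe]⟩
  have hs3 : 3 * (20 * k + 12) ≤ s * (20 * k + 12) := Nat.mul_le_mul_right _ hs
  have hadjval : ∀ ⦃a b : W⦄, (mergeMap G p).Adj a b →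
      fplus (mergeMap G p) g a ≠ fplus (mergeMap G p) g b := by
    intro a b hab
    obtain ⟨hne, x, y, hxy, rfl, rfl⟩ := (mergeMap_adj_iff G p).1 hab
    rcases x with q1 | j <;> rcases y with q2 | j'
    · rw [hval3 q1, hval3 q2]
      exact hf.2 hxy
    · rw [hval3 q1, hval4 j']
      rcases hdeg3 _ ⟨q1, rfl⟩ with h | h <;> rw [h] <;> omega
    · rw [hval3 q2, hval4 j]
      rcases hdeg3 _ ⟨q2, rfl⟩ with h | h <;> rw [h] <;> omega
    · exact absurd hxy (hrr j j')
  -- the range of the induced labels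
  have hne01 : ((0 : Fin (n+1)), (0 : Fin 2)) ≠ ((0 : Fin (n+1)), (1 : Fin 2)) := by
    intro h
    have h2 : (0 : Fin 2) = 1 := congrArg Prod.snd h
    exact absurd h2 (by decide)
  have hTB01 : G.Adj (Sum.inl ((0 : Fin (n+1)), (0 : Fin 2)))
      (Sum.inl ((0 : Fin (n+1)), (1 : Fin 2))) := by
    rw [hG, TB, SimpleGraph.fromRel_adj]
    exact ⟨fun h => hne01 (Sum.inl.inj h), Or.inl ⟨rfl, rfl, rfl⟩⟩
  have huv : fplus G f (Sum.inl ((0 : Fin (n+1)), (0 : Fin 2)))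
      ≠ fplus G f (Sum.inl ((0 : Fin (n+1)), (1 : Fin 2))) := hf.2 hTB01
  have hu := hdeg3 (Sum.inl ((0 : Fin (n+1)), (0 : Fin 2))) ⟨_, rfl⟩
  have hv := hdeg3 (Sum.inl ((0 : Fin (n+1)), (1 : Fin 2))) ⟨_, rfl⟩
  have hocc : (∃ q' : Fin (n+1) × Fin 2, fplus G f (Sum.inl q') = 9 * k + 6) ∧
      (∃ q' : Fin (n+1) × Fin 2, fplus G f (Sum.inl q') = 21 * k + 12) := by
    rcases hu with h1 | h1 <;> rcases hv with h2 | h2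
    · exact absurd (h1.trans h2.symm) huv
    · exact ⟨⟨_, h1⟩, ⟨_, h2⟩⟩
    · exact ⟨⟨_, h2⟩, ⟨_, h1⟩⟩
    · exact absurd (h1.trans h2.symm) huv
  have hrange : Set.range (fplus (mergeMap G p) g)
      = {9 * k + 6, 21 * k + 12, s * (20 * k + 12)} := by
    apply Set.eq_of_subset_of_subset
    · rintro t ⟨w, rfl⟩
      obtain ⟨v, rfl⟩ := hp.1 w
      rcases v with q' | j
      · rw [hval3 q']
        rcases hdeg3 _ ⟨q', rfl⟩ with h | h <;> rw [h] <;> simp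
      · rw [hval4 j]; simp
    · intro t ht
      simp only [Set.mem_insert_iff, Set.mem_singleton_iff] at ht
      rcases ht with rfl | rfl | rfl
      · obtain ⟨q', hq'⟩ := hocc.1
        exact ⟨p (Sum.inl q'), by rw [hval3, hq']⟩
      · obtain ⟨q', hq'⟩ := hocc.2
        exact ⟨p (Sum.inl q'), by rw [hval3, hq']⟩
      · exact ⟨p (Sum.inr 0), hval4 0⟩
  have h3card : (Set.range (fplus (mergeMap G p) g)).ncard = 3 := by
    rw [hrange]
    exact Set.ncard_eq_three.2 ⟨_, _, _, by omega, by omega, by omega, rfl⟩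
  have h3mem : 3 ∈ {c : ℕ | ∃ f' : Sym2 W → ℕ, IsLocalAntimagic (mergeMap G p) f' ∧
      (Set.range (fplus (mergeMap G p) f')).ncard = c} :=
    ⟨g, ⟨hbij, hadjval⟩, h3card⟩
  -- lower bound: a triangle in the merged graph
  have hTBx0 : G.Adj (Sum.inl ((0 : Fin (n+1)), (0 : Fin 2))) (Sum.inr (0 : Fin (n+1))) := by
    rw [hG, TB, SimpleGraph.fromRel_adj]
    exact ⟨by simp, Or.inr (Or.inl rfl)⟩
  have hTBx1 : G.Adj (Sum.inl ((0 : Fin (n+1)), (1 : Fin 2))) (Sum.inr (0 : Fin (n+1))) := by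
    rw [hG, TB, SimpleGraph.fromRel_adj]
    exact ⟨by simp, Or.inr (Or.inl rfl)⟩
  have hpne1 : p (Sum.inl ((0 : Fin (n+1)), (0 : Fin 2)))
      ≠ p (Sum.inl ((0 : Fin (n+1)), (1 : Fin 2))) := by
    intro h
    exact hne01 (Sum.inl.inj (hinl_norm _ _ h))
  have ha1 : (mergeMap G p).Adj (p (Sum.inl ((0 : Fin (n+1)), (0 : Fin 2))))
      (p (Sum.inl ((0 : Fin (n+1)), (1 : Fin 2)))) :=
    (mergeMap_adj_iff G p).2 ⟨hpne1, _, _, hTB01, rfl, rfl⟩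
  have ha2 : (mergeMap G p).Adj (p (Sum.inl ((0 : Fin (n+1)), (0 : Fin 2))))
      (p (Sum.inr (0 : Fin (n+1)))) :=
    (mergeMap_adj_iff G p).2 ⟨hadj_ne hTBx0, _, _, hTBx0, rfl, rfl⟩
  have ha3 : (mergeMap G p).Adj (p (Sum.inl ((0 : Fin (n+1)), (1 : Fin 2))))
      (p (Sum.inr (0 : Fin (n+1)))) :=
    (mergeMap_adj_iff G p).2 ⟨hadj_ne hTBx1, _, _, hTBx1, rfl, rfl⟩
  have hWfin : Finite W := Finite.of_surjective p hp.1
  have hlow : ∀ c ∈ {c : ℕ | ∃ f' : Sym2 W → ℕ, IsLocalAntimagic (mergeMap G p) f' ∧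
      (Set.range (fplus (mergeMap G p) f')).ncard = c}, 3 ≤ c := by
    rintro c ⟨g', hg', rfl⟩
    set t1 := fplus (mergeMap G p) g' (p (Sum.inl ((0 : Fin (n+1)), (0 : Fin 2))))
    set t2 := fplus (mergeMap G p) g' (p (Sum.inl ((0 : Fin (n+1)), (1 : Fin 2))))
    set t3 := fplus (mergeMap G p) g' (p (Sum.inr (0 : Fin (n+1))))
    have h12 : t1 ≠ t2 := hg'.2 ha1
    have h13 : t1 ≠ t3 := hg'.2 ha2
    have h23 : t2 ≠ t3 := hg'.2 ha3
    have hsub : ({t1, t2, t3} : Set ℕ) ⊆ Set.range (fplus (mergeMap G p) g') := by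
      intro t ht
      simp only [Set.mem_insert_iff, Set.mem_singleton_iff] at ht
      rcases ht with rfl | rfl | rfl
      · exact ⟨_, rfl⟩
      · exact ⟨_, rfl⟩
      · exact ⟨_, rfl⟩
    calc (3 : ℕ) = ({t1, t2, t3} : Set ℕ).ncard :=
          (Set.ncard_eq_three.2 ⟨t1, t2, t3, h12, h13, h23, rfl⟩).symm
      _ ≤ (Set.range (fplus (mergeMap G p) g')).ncard :=
          Set.ncard_le_ncard hsub (Set.finite_range _)
  exact le_antisymm (Nat.sInf_le h3mem) (hlow _ (Nat.sInf_mem ⟨3, h3mem⟩))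

end LocalAntimagic
end
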